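/- arXiv:2505.22492 — 8 statements merged into one kernel-verified Lean document; each statement's English description precedes it below -/
import Mathlib

section
/- Let (Ω, ℱ, ℙ) be a probability space, T ∈ ℕ, and ℱ₀ ⊆ ℱ₁ ⊆ … ⊆ ℱ_T ⊆ ℱ a monotone family of sub-σ-algebras. For each t ∈ {0,…,T} let ℋ'_t ⊆ ℋ_t ⊆ ℱ_t be sub-σ-algebras and let λ_t and U_t be bounded random variables such that: (i) 𝔼[U_t | ℱ_t] = 0 almost surely; (ii) U_{t'} is ℱ_t-measurable for every t' < t; and (iii) 𝔼[U_t² | ℋ_t] is almost surely equal to an ℋ'_t-measurable random variable. Let Q₀ be a bounded ℱ₀-measurable random variable. Then Var(Q₀ + ∑_{t=0}^{T} 𝔼[λ_t | ℋ'_t]·U_t) ≤ Var(Q₀ + ∑_{t=0}^{T} 𝔼[λ_t | ℋ_t]·U_t). -/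
/-!
Both estimators are `Q₀ + ∑ t, Z t * U t` with `Z t` bounded and `ℱ t`-measurable, so the
summands are martingale differences: orthogonal to `Q₀`, to each other and to constants, whence
`Var = Var Q₀ + ∑ t, 𝔼[(Z t)² (U t)²]`. It remains to compare term by term. With
`w = 𝔼[λ | ℋ]`, `w' = 𝔼[λ | ℋ'] = 𝔼[w | ℋ']` and `σ² = 𝔼[U² | ℋ]` being `ℋ'`-measurable,
`𝔼[w w' U²] = 𝔼[w w' σ²] = 𝔼[w'² σ²] = 𝔼[w'² U²]`, so
`𝔼[w² U²] - 𝔼[w'² U²] = 𝔼[(w - w')² U²] ≥ 0`.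
-/

open MeasureTheory

/-- Variance of a real random variable: `Var(Y) = 𝔼[Y²] − (𝔼[Y])²`. -/
noncomputable def var {Ω : Type*} [MeasurableSpace Ω] (μ : Measure Ω) (Y : Ω → ℝ) : ℝ :=
  (∫ ω, (Y ω) ^ 2 ∂μ) - (∫ ω, Y ω ∂μ) ^ 2

open Filter
open scoped ENNReal

section CondExp

variable {Ω : Type*} {m m0 : MeasurableSpace Ω} {μ : Measure Ω}

theorem integral_mul_condExp_of_stronglyMeasurable (hm : m ≤ m0) [SigmaFinite (μ.trim hm)]
    {Z f : Ω → ℝ} (hZ : StronglyMeasurable[m] Z) (hZf : Integrable (Z * f) μ)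
    (hf : Integrable f μ) :
    ∫ ω, Z ω * (μ[f|m]) ω ∂μ = ∫ ω, Z ω * f ω ∂μ :=
  calc ∫ ω, Z ω * (μ[f|m]) ω ∂μ = ∫ ω, (μ[Z * f|m]) ω ∂μ :=
        integral_congr_ae (condExp_mul_of_stronglyMeasurable_left hZ hZf hf).symm
    _ = ∫ ω, Z ω * f ω ∂μ := integral_condExp hm

theorem integral_mul_eq_zero_of_condExp_eq_zero (hm : m ≤ m0) [SigmaFinite (μ.trim hm)]
    {Z U : Ω → ℝ} (hZ : StronglyMeasurable[m] Z) (hZU : Integrable (Z * U) μ)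
    (hU : Integrable U μ) (hU_cond : μ[U|m] =ᵐ[μ] 0) :
    ∫ ω, Z ω * U ω ∂μ = 0 := by
  rw [← integral_mul_condExp_of_stronglyMeasurable hm hZ hZU hU]
  refine (integral_congr_ae ?_).trans (integral_zero Ω ℝ)
  filter_upwards [hU_cond] with ω hω
  simp [hω]

theorem memLp_top_condExp_of_ae_abs_le {f : Ω → ℝ} {C : ℝ} (hf : ∀ᵐ ω ∂μ, |f ω| ≤ C) :
    MemLp (μ[f|m]) ∞ μ :=
  memLp_top_of_bound integrable_condExp.aestronglyMeasurable C
    (ae_bdd_abs_condExp_of_ae_bdd_abs hf)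

end CondExp

section Variance

variable {Ω : Type*} {m0 : MeasurableSpace Ω} {μ : Measure Ω} [IsFiniteMeasure μ]

theorem var_add_of_orthogonal {Y X : Ω → ℝ} (hY : MemLp Y 2 μ) (hX : MemLp X 2 μ)
    (hX_mean : ∫ ω, X ω ∂μ = 0) (hYX : ∫ ω, Y ω * X ω ∂μ = 0) :
    var μ (fun ω => Y ω + X ω) = var μ Y + ∫ ω, X ω ^ 2 ∂μ := by
  have hsq_int : Integrable (fun ω => Y ω ^ 2 + X ω ^ 2) μ :=
    hY.integrable_sq.add hX.integrable_sq
  have hYX_int : Integrable (fun ω => 2 * (Y ω * X ω)) μ := (hY.integrable_mul hX).const_mul 2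
  have h_mean : ∫ ω, (Y ω + X ω) ∂μ = ∫ ω, Y ω ∂μ := by
    rw [integral_add (hY.integrable one_le_two) (hX.integrable one_le_two), hX_mean, add_zero]
  have h_sq : ∫ ω, (Y ω + X ω) ^ 2 ∂μ = ∫ ω, Y ω ^ 2 ∂μ + ∫ ω, X ω ^ 2 ∂μ := by
    simp_rw [add_sq', mul_assoc]
    rw [integral_add hsq_int hYX_int,
      integral_add hY.integrable_sq hX.integrable_sq, integral_const_mul, hYX, mul_zero, add_zero]
  simp only [var, h_mean, h_sq]
  ring

theorem var_add_sum_of_orthogonal {ι : Type*} (s : Finset ι) {Q : Ω → ℝ} {X : ι → Ω → ℝ}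
    (hQ : MemLp Q 2 μ) (hX : ∀ i ∈ s, MemLp (X i) 2 μ)
    (hX_mean : ∀ i ∈ s, ∫ ω, X i ω ∂μ = 0) (hQX : ∀ i ∈ s, ∫ ω, Q ω * X i ω ∂μ = 0)
    (hXX : (s : Set ι).Pairwise fun i j => ∫ ω, X i ω * X j ω ∂μ = 0) :
    var μ (fun ω => Q ω + ∑ i ∈ s, X i ω) = var μ Q + ∑ i ∈ s, ∫ ω, X i ω ^ 2 ∂μ := by
  classical
  induction s using Finset.induction_on with
  | empty => simp
  | insert a s ha ih =>
    simp only [Finset.mem_insert, forall_eq_or_imp] at hX hX_mean hQX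
    rw [Finset.coe_insert, Set.pairwise_insert_of_notMem (by exact_mod_cast ha)] at hXX
    have hS : MemLp (fun ω => Q ω + ∑ i ∈ s, X i ω) 2 μ :=
      hQ.add (memLp_finsetSum s hX.2)
    have hQX_int : Integrable (fun ω => Q ω * X a ω) μ := hQ.integrable_mul hX.1
    have hXX_int : ∀ i ∈ s, Integrable (fun ω => X i ω * X a ω) μ := fun i hi =>
      (hX.2 i hi).integrable_mul hX.1
    have h_orth : ∫ ω, (Q ω + ∑ i ∈ s, X i ω) * X a ω ∂μ = 0 := by
      simp_rw [add_mul, Finset.sum_mul]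
      rw [integral_add hQX_int (integrable_finsetSum s hXX_int), integral_finsetSum s hXX_int,
        hQX.1, Finset.sum_eq_zero fun i hi => (hXX.2 i hi).2, add_zero]
    have h_split : (fun ω => Q ω + ∑ i ∈ insert a s, X i ω)
        = fun ω => (Q ω + ∑ i ∈ s, X i ω) + X a ω := by
      ext ω
      rw [Finset.sum_insert ha]
      ring
    rw [h_split, Finset.sum_insert ha, var_add_of_orthogonal hS hX.1 hX_mean.1 h_orth,
      ih hX.2 hX_mean.2 hQX.2 hXX.1]
    ring

end Variance

section MartingaleDifference

variable {Ω : Type*} {m0 : MeasurableSpace Ω} {μ : Measure Ω} [IsFiniteMeasure μ]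
  {ι : Type*} [Fintype ι] [LinearOrder ι]

theorem var_add_sum_mul_of_condExp_eq_zero {ℱ : ι → MeasurableSpace Ω} (hmono : Monotone ℱ)
    (hle : ∀ t, ℱ t ≤ m0) {U Z : ι → Ω → ℝ} (hU : ∀ t, MemLp (U t) ∞ μ)
    (hU_cond : ∀ t, μ[U t|ℱ t] =ᵐ[μ] 0)
    (hU_prev : ∀ s t, s < t → StronglyMeasurable[ℱ t] (U s))
    (hZ_meas : ∀ t, StronglyMeasurable[ℱ t] (Z t)) (hZ : ∀ t, MemLp (Z t) ∞ μ)
    {Q : Ω → ℝ} (hQ_meas : ∀ t, StronglyMeasurable[ℱ t] Q) (hQ : MemLp Q ∞ μ) :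
    var μ (fun ω => Q ω + ∑ t, Z t ω * U t ω) =
      var μ Q + ∑ t, ∫ ω, (Z t ω * U t ω) ^ 2 ∂μ := by
  have h_orth : ∀ t Y, StronglyMeasurable[ℱ t] Y → MemLp Y ∞ μ → ∫ ω, Y ω * U t ω ∂μ = 0 :=
    fun t Y hY_meas hY => integral_mul_eq_zero_of_condExp_eq_zero (hle t) hY_meas
      (((hU t).integrable le_top).mul_of_top_right hY) ((hU t).integrable le_top) (hU_cond t)
  have hZU : ∀ t, MemLp (fun ω => Z t ω * U t ω) ∞ μ := fun t => (hU t).mul' (hZ t)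
  have h_lt : ∀ s t, s < t → ∫ ω, (Z s ω * U s ω) * (Z t ω * U t ω) ∂μ = 0 := by
    intro s t hst
    simp_rw [← mul_assoc]
    exact h_orth t _ ((((hZ_meas s).mono (hmono hst.le)).mul (hU_prev s t hst)).mul (hZ_meas t))
      ((hZ t).mul' (hZU s))
  refine var_add_sum_of_orthogonal _ (hQ.mono_exponent le_top)
    (fun t _ => (hZU t).mono_exponent le_top) (fun t _ => h_orth t _ (hZ_meas t) (hZ t))
    (fun t _ => ?_) ?_
  · simp_rw [← mul_assoc]
    exact h_orth t _ ((hQ_meas t).mul (hZ_meas t)) ((hZ t).mul' hQ)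
  · intro s _ t _ hst
    rcases hst.lt_or_gt with h | h
    · exact h_lt s t h
    · simpa only [mul_comm] using h_lt t s h

end MartingaleDifference

section ConditionalVariance

variable {Ω : Type*} {m0 : MeasurableSpace Ω} {μ : Measure Ω} [IsFiniteMeasure μ]

theorem integral_sq_condExp_mul_le {m' m : MeasurableSpace Ω} (hm' : m' ≤ m) (hm : m ≤ m0)
    {f V g : Ω → ℝ} {C : ℝ} (hf : ∀ᵐ ω ∂μ, |f ω| ≤ C) (hV : Integrable V μ)
    (hV_nonneg : 0 ≤ᵐ[μ] V) (hg : StronglyMeasurable[m'] g) (hVg : μ[V|m] =ᵐ[μ] g) :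
    ∫ ω, (μ[f|m'] ω) ^ 2 * V ω ∂μ ≤ ∫ ω, (μ[f|m] ω) ^ 2 * V ω ∂μ := by
  set w := μ[f|m]
  set w' := μ[f|m']
  have hw : MemLp w ∞ μ := memLp_top_condExp_of_ae_abs_le hf
  have hw' : MemLp w' ∞ μ := memLp_top_condExp_of_ae_abs_le hf
  have hw_meas : StronglyMeasurable[m] w := stronglyMeasurable_condExp
  have hw'_meas : StronglyMeasurable[m'] w' := stronglyMeasurable_condExp
  have hV_mul : ∀ {a b : Ω → ℝ}, MemLp a ∞ μ → MemLp b ∞ μ →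
      Integrable (fun ω => a ω * b ω * V ω) μ := fun ha hb => hV.mul_of_top_right (hb.mul' ha)
  have hV_to_g : ∀ h : Ω → ℝ, StronglyMeasurable[m] h → MemLp h ∞ μ →
      ∫ ω, h ω * V ω ∂μ = ∫ ω, h ω * g ω ∂μ := fun h hh_meas hh => by
    rw [← integral_mul_condExp_of_stronglyMeasurable hm hh_meas (hV.mul_of_top_right hh) hV]
    exact integral_congr_ae (hVg.mono fun ω hω => by simp only [hω])
  have h_cross : ∫ ω, w ω * w' ω * V ω ∂μ = ∫ ω, w' ω * w' ω * V ω ∂μ :=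
    calc ∫ ω, w ω * w' ω * V ω ∂μ = ∫ ω, w ω * w' ω * g ω ∂μ :=
          hV_to_g _ (hw_meas.mul (hw'_meas.mono hm')) (hw'.mul' hw)
      _ = ∫ ω, (w' ω * g ω) * w ω ∂μ := by congr 1; ext ω; ring
      _ = ∫ ω, (w' ω * g ω) * (μ[w|m']) ω ∂μ :=
          (integral_mul_condExp_of_stronglyMeasurable (hm'.trans hm) (hw'_meas.mul hg)
            (((integrable_condExp.congr hVg).mul_of_top_right hw').mul_of_top_left hw)
            (hw.integrable le_top)).symm
      _ = ∫ ω, (w' ω * g ω) * w' ω ∂μ :=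
          integral_congr_ae ((condExp_condExp_of_le (f := f) hm' hm).mono fun ω hω => by
            simp only [w, w', hω])
      _ = ∫ ω, w' ω * w' ω * g ω ∂μ := by congr 1; ext ω; ring
      _ = ∫ ω, w' ω * w' ω * V ω ∂μ :=
          (hV_to_g _ ((hw'_meas.mul hw'_meas).mono hm') (hw'.mul' hw')).symm
  have h_expand : ∫ ω, (w ω - w' ω) ^ 2 * V ω ∂μ =
      ∫ ω, w ω * w ω * V ω ∂μ - 2 * ∫ ω, w ω * w' ω * V ω ∂μ + ∫ ω, w' ω * w' ω * V ω ∂μ := by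
    have h_diff : Integrable (fun ω => w ω * w ω * V ω - 2 * (w ω * w' ω * V ω)) μ :=
      (hV_mul hw hw).sub ((hV_mul hw hw').const_mul 2)
    rw [← integral_const_mul, ← integral_sub (hV_mul hw hw) ((hV_mul hw hw').const_mul 2),
      ← integral_add h_diff (hV_mul hw' hw')]
    congr 1; ext ω; ring
  have h_nonneg : 0 ≤ ∫ ω, (w ω - w' ω) ^ 2 * V ω ∂μ :=
    integral_nonneg_of_ae (hV_nonneg.mono fun ω hω => mul_nonneg (sq_nonneg _) hω)
  simp only [sq]
  linarith

end ConditionalVariance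

theorem stmt_7_general {Ω : Type*} {m0 : MeasurableSpace Ω} (μ : Measure Ω) [IsProbabilityMeasure μ]
    (T : ℕ) (ℱ : Fin (T + 1) → MeasurableSpace Ω)
    (hmono : Monotone ℱ) (hle : ∀ t, ℱ t ≤ m0)
    (ℋ' ℋ : Fin (T + 1) → MeasurableSpace Ω)
    (hℋ'ℋ : ∀ t, ℋ' t ≤ ℋ t) (hℋℱ : ∀ t, ℋ t ≤ ℱ t)
    (lam U : Fin (T + 1) → Ω → ℝ)
    (hUmeas : ∀ t, StronglyMeasurable[m0] (U t))
    (Cl CU : ℝ) (hlambd : ∀ t ω, |lam t ω| ≤ Cl) (hUbd : ∀ t ω, |U t ω| ≤ CU)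
    (hUcond : ∀ t, μ[U t|ℱ t] =ᵐ[μ] 0)
    (hUprev : ∀ t' t : Fin (T + 1), t' < t → StronglyMeasurable[ℱ t] (U t'))
    (hU2 : ∀ t, ∃ g : Ω → ℝ, StronglyMeasurable[ℋ' t] g ∧
      (μ[fun ω => (U t ω) ^ 2|ℋ t]) =ᵐ[μ] g)
    (Q₀ : Ω → ℝ) (hQ₀meas : StronglyMeasurable[ℱ 0] Q₀)
    (CQ : ℝ) (hQ₀bd : ∀ ω, |Q₀ ω| ≤ CQ) :
    var μ (fun ω => Q₀ ω + ∑ t, (μ[lam t|ℋ' t]) ω * U t ω) ≤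
      var μ (fun ω => Q₀ ω + ∑ t, (μ[lam t|ℋ t]) ω * U t ω) := by
  have hU : ∀ t, MemLp (U t) ∞ μ := fun t =>
    memLp_top_of_bound (hUmeas t).aestronglyMeasurable CU (Eventually.of_forall (hUbd t))
  have hQ : MemLp Q₀ ∞ μ :=
    memLp_top_of_bound (hQ₀meas.mono (hle 0)).aestronglyMeasurable CQ (Eventually.of_forall hQ₀bd)
  have hQ_meas : ∀ t, StronglyMeasurable[ℱ t] Q₀ := fun t => hQ₀meas.mono (hmono (Fin.zero_le t))
  have hlam : ∀ t, ∀ᵐ ω ∂μ, |lam t ω| ≤ Cl := fun t => Eventually.of_forall (hlambd t)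
  have hw : ∀ (𝒢 : Fin (T + 1) → MeasurableSpace Ω) t, MemLp (μ[lam t|𝒢 t]) ∞ μ :=
    fun _ t => memLp_top_condExp_of_ae_abs_le (hlam t)
  rw [var_add_sum_mul_of_condExp_eq_zero hmono hle hU hUcond hUprev
      (fun t => stronglyMeasurable_condExp.mono ((hℋ'ℋ t).trans (hℋℱ t))) (hw ℋ') hQ_meas hQ,
    var_add_sum_mul_of_condExp_eq_zero hmono hle hU hUcond hUprev
      (fun t => stronglyMeasurable_condExp.mono (hℋℱ t)) (hw ℋ) hQ_meas hQ]
  gcongr _ + ∑ t, ?_ with t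
  obtain ⟨g, hg, hUg⟩ := hU2 t
  simp only [mul_pow]
  exact integral_sq_condExp_mul_le (hℋ'ℋ t) ((hℋℱ t).trans (hle t)) (hlam t)
    ((hU t).mono_exponent le_top).integrable_sq (Eventually.of_forall fun ω => sq_nonneg _) hg hUg

/-- Abstract form of Theorem 4.6: the MIS estimator whose ratio conditions on a longer
history (finer σ-algebra `ℋ t`) has variance at least as large as the one conditioning on a
shorter history (coarser σ-algebra `ℋ' t ⊆ ℋ t`), when the Bellman residuals `U t` have
zero conditional mean given `ℱ t` and conditional second moments that are
`ℋ' t`-measurable. -/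
theorem stmt_7 {Ω : Type*} {m0 : MeasurableSpace Ω} (μ : Measure Ω) [IsProbabilityMeasure μ]
    (T : ℕ) (ℱ : Fin (T + 1) → MeasurableSpace Ω)
    (hmono : Monotone ℱ) (hle : ∀ t, ℱ t ≤ m0)
    (ℋ' ℋ : Fin (T + 1) → MeasurableSpace Ω)
    (hℋ'ℋ : ∀ t, ℋ' t ≤ ℋ t) (hℋℱ : ∀ t, ℋ t ≤ ℱ t)
    (lam U : Fin (T + 1) → Ω → ℝ)
    (hlammeas : ∀ t, StronglyMeasurable[m0] (lam t))
    (hUmeas : ∀ t, StronglyMeasurable[m0] (U t))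
    (Cl CU : ℝ) (hlambd : ∀ t ω, |lam t ω| ≤ Cl) (hUbd : ∀ t ω, |U t ω| ≤ CU)
    (hUcond : ∀ t, μ[U t|ℱ t] =ᵐ[μ] 0)
    (hUprev : ∀ t' t : Fin (T + 1), t' < t → StronglyMeasurable[ℱ t] (U t'))
    (hU2 : ∀ t, ∃ g : Ω → ℝ, StronglyMeasurable[ℋ' t] g ∧
      (μ[fun ω => (U t ω) ^ 2|ℋ t]) =ᵐ[μ] g)
    (Q₀ : Ω → ℝ) (hQ₀meas : StronglyMeasurable[ℱ 0] Q₀)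
    (CQ : ℝ) (hQ₀bd : ∀ ω, |Q₀ ω| ≤ CQ) :
    var μ (fun ω => Q₀ ω + ∑ t, (μ[lam t|ℋ' t]) ω * U t ω) ≤
      var μ (fun ω => Q₀ ω + ∑ t, (μ[lam t|ℋ t]) ω * U t ω) :=
  stmt_7_general μ T ℱ hmono hle ℋ' ℋ hℋ'ℋ hℋℱ lam U hUmeas Cl CU hlambd hUbd hUcond hUprev hU2 Q₀
    hQ₀meas CQ hQ₀bd
end

section
/- Let (Ω, ℙ) be a probability space, 𝒮 and 𝒜 finite nonempty types, S : Ω → 𝒮 and A : Ω → 𝒜 independent random variables with ℙ(S = s) > 0 and ℙ(A = a) > 0 for all s, a, and R : Ω → ℝ a square-integrable random variable. Define μ(a) = 𝔼[R·1{A = a}]/ℙ(A = a) and r(s, a) = 𝔼[R·1{S = s, A = a}]/ℙ(S = s, A = a). Let π_b(a) := ℙ(A = a), let π_e : 𝒜 → ℝ be nonnegative with ∑_a π_e(a) = 1, and set W = π_e(A)/π_b(A). Then Var(∑_{a ∈ 𝒜} π_e(a)·r(S, a)) + Var(W·(R − r(S, A))) ≤ Var(W·(R − μ(A))). -/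
/-!
`r` and `m` are the conditional means of `R` given `(S, A)` and given `A`, so `R - r (S, A)` and
`R - m A` are orthogonal to every function of `(S, A)`, resp. of `A`. Hence both importance-sampling
terms are centred, and Pythagoras gives
`𝔼[W² (R - m A)²] = 𝔼[W² (R - r (S, A))²] + 𝔼[W² (r (S, A) - m A)²]`.
The last term dominates the variance of `∑ₐ πe a * r (S, a)`: centre it at `∑ₐ πe a * m a` and apply
Cauchy–Schwarz in `a` with the weights `πb`, which by independence are the law of `A` given `S`.
-/

open MeasureTheory ProbabilityTheory

section FiniteValued

variable {Ω ι : Type*} [MeasurableSpace Ω] {μ : Measure Ω}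
  [Fintype ι] [MeasurableSpace ι] [MeasurableSingletonClass ι] {X : Ω → ι}

lemma memLp_comp_of_fintype [IsFiniteMeasure μ] (hX : Measurable X) (ψ : ι → ℝ) (p : ENNReal) :
    MemLp (fun ω => ψ (X ω)) p μ :=
  .of_bound ((measurable_of_finite ψ).comp hX).aestronglyMeasurable (∑ i, ‖ψ i‖) <|
    ae_of_all _ fun _ =>
      Finset.single_le_sum (f := fun i => ‖ψ i‖) (fun _ _ => norm_nonneg _) (Finset.mem_univ _)

lemma integral_comp_of_fintype [IsFiniteMeasure μ] (hX : Measurable X) (ψ : ι → ℝ) :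
    ∫ ω, ψ (X ω) ∂μ = ∑ i, μ.real (X ⁻¹' {i}) * ψ i := by
  rw [← integral_map hX.aemeasurable (measurable_of_finite ψ).aestronglyMeasurable,
    integral_fintype .of_finite]
  simp [map_measureReal_apply hX (measurableSet_singleton _)]

lemma integral_eq_sum_setIntegral_preimage (hX : Measurable X) {f : Ω → ℝ}
    (hf : Integrable f μ) : ∫ ω, f ω ∂μ = ∑ i, ∫ ω in X ⁻¹' {i}, f ω ∂μ := by
  rw [← integral_iUnion_fintype (fun i => hX (measurableSet_singleton i))
    (fun i j hij => Set.disjoint_singleton.2 hij |>.preimage X) fun _ => hf.integrableOn,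
    ← Set.preimage_iUnion, Set.iUnion_of_singleton, Set.preimage_univ, setIntegral_univ]

lemma integral_comp_mul_sub_condMean_eq_zero [IsFiniteMeasure μ] (hX : Measurable X) {R : Ω → ℝ}
    (hR : Integrable R μ) (g : ι → ℝ)
    (hg : ∀ i, g i = (∫ ω, {ω' | X ω' = i}.indicator R ω ∂μ) / (μ {ω | X ω = i}).toReal)
    (ψ : ι → ℝ) : ∫ ω, ψ (X ω) * (R ω - g (X ω)) ∂μ = 0 := by
  have hint : Integrable (fun ω => ψ (X ω) * (R ω - g (X ω))) μ :=
    memLp_one_iff_integrable.1 <| (memLp_one_iff_integrable.2 <|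
      hR.sub ((memLp_comp_of_fintype hX g 1).integrable le_rfl)).mul' (memLp_comp_of_fintype hX ψ ⊤)
  rw [integral_eq_sum_setIntegral_preimage hX hint]
  refine Finset.sum_eq_zero fun i _ => ?_
  have hXi : MeasurableSet (X ⁻¹' {i}) := hX (measurableSet_singleton i)
  rw [setIntegral_congr_fun hXi fun ω (hω : X ω = i) => by rw [hω],
    integral_const_mul, integral_sub hR.integrableOn integrableOn_const, setIntegral_const,
    smul_eq_mul]
  rcases eq_or_ne (μ (X ⁻¹' {i})) 0 with hnull | hpos
  · simp [setIntegral_measure_zero _ hnull, measureReal_def, hnull]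
  · have hgi : μ.real (X ⁻¹' {i}) * g i = ∫ ω in X ⁻¹' {i}, R ω ∂μ := by
      rw [hg i, ← integral_indicator hXi]
      exact mul_div_cancel₀ _ (ENNReal.toReal_ne_zero.2 ⟨hpos, measure_ne_top μ _⟩)
    rw [hgi, sub_self, mul_zero]

end FiniteValued

section Variance

variable {Ω : Type*} [MeasurableSpace Ω] {μ : Measure Ω} {Y Z : Ω → ℝ}

lemma var_eq_integral_sq_of_integral_eq_zero (h : ∫ ω, Y ω ∂μ = 0) :
    var μ Y = ∫ ω, Y ω ^ 2 ∂μ := by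
  simp [var, h]

lemma var_le_integral_sub_sq [IsProbabilityMeasure μ] (hY : MemLp Y 2 μ) (c : ℝ) :
    var μ Y ≤ ∫ ω, (Y ω - c) ^ 2 ∂μ := by
  have hexpand : ∫ ω, (Y ω - c) ^ 2 ∂μ = ∫ ω, Y ω ^ 2 ∂μ - 2 * c * ∫ ω, Y ω ∂μ + c ^ 2 := by
    have hlin : Integrable (fun ω => 2 * Y ω * c) μ :=
      ((hY.integrable one_le_two).const_mul 2).mul_const c
    have hquad : Integrable (fun ω => Y ω ^ 2 - 2 * Y ω * c) μ := hY.integrable_sq.sub hlin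
    simp_rw [sub_sq]
    rw [integral_add hquad (integrable_const _), integral_sub hY.integrable_sq hlin,
      integral_mul_const, integral_const_mul]
    simp [mul_right_comm]
  rw [var, hexpand]
  nlinarith [sq_nonneg (∫ ω, Y ω ∂μ - c)]

lemma integral_add_sq_of_integral_mul_eq_zero (hY : MemLp Y 2 μ) (hZ : MemLp Z 2 μ)
    (h : ∫ ω, Y ω * Z ω ∂μ = 0) :
    ∫ ω, (Y ω + Z ω) ^ 2 ∂μ = ∫ ω, Y ω ^ 2 ∂μ + ∫ ω, Z ω ^ 2 ∂μ := by
  have hYZ : Integrable (fun ω => 2 * (Y ω * Z ω)) μ := (hY.integrable_mul hZ).const_mul 2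
  have hYsqYZ : Integrable (fun ω => Y ω ^ 2 + 2 * (Y ω * Z ω)) μ := hY.integrable_sq.add hYZ
  simp_rw [add_sq, mul_assoc]
  rw [integral_add hYsqYZ hZ.integrable_sq,
    integral_add hY.integrable_sq hYZ, integral_const_mul, h, mul_zero, add_zero]

end Variance

section Independence

variable {Ω 𝒮 𝒜 : Type*} [MeasurableSpace Ω] {μ : Measure Ω} [IsFiniteMeasure μ]
  [Fintype 𝒮] [MeasurableSpace 𝒮] [MeasurableSingletonClass 𝒮]
  [Fintype 𝒜] [MeasurableSpace 𝒜] [MeasurableSingletonClass 𝒜]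
  {S : Ω → 𝒮} {A : Ω → 𝒜}

lemma ProbabilityTheory.IndepFun.integral_comp₂_eq_sum (hS : Measurable S) (hA : Measurable A)
    (hind : IndepFun S A μ) (f : 𝒮 → 𝒜 → ℝ) :
    ∫ ω, f (S ω) (A ω) ∂μ =
      ∑ s, ∑ a, μ.real (S ⁻¹' {s}) * μ.real (A ⁻¹' {a}) * f s a := by
  rw [integral_comp_of_fintype (hS.prodMk hA) (fun x => f x.1 x.2), Fintype.sum_prod_type]
  refine Finset.sum_congr rfl fun s _ => Finset.sum_congr rfl fun a _ => ?_
  rw [← Set.singleton_prod_singleton, Set.mk_preimage_prod, measureReal_def, measureReal_def,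
    measureReal_def, hind.measure_inter_preimage_eq_mul _ _ (measurableSet_singleton s)
      (measurableSet_singleton a), ENNReal.toReal_mul]

variable [IsProbabilityMeasure μ]

lemma sum_measureReal_preimage_singleton_eq_one (hA : Measurable A) :
    ∑ a, μ.real (A ⁻¹' {a}) = 1 := by
  simpa using (integral_comp_of_fintype (μ := μ) hA fun _ => (1 : ℝ)).symm

lemma var_sum_mul_le_integral_sq (hS : Measurable S) (hA : Measurable A)
    (hind : IndepFun S A μ) (hA0 : ∀ a, μ (A ⁻¹' {a}) ≠ 0)
    (πe : 𝒜 → ℝ) (r : 𝒮 → 𝒜 → ℝ) (m : 𝒜 → ℝ) :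
    var μ (fun ω => ∑ a, πe a * r (S ω) a) ≤
      ∫ ω, (πe (A ω) / μ.real (A ⁻¹' {A ω}) * (r (S ω) (A ω) - m (A ω))) ^ 2 ∂μ := by
  have hq : ∀ a, 0 < μ.real (A ⁻¹' {a}) := fun a =>
    ENNReal.toReal_pos (hA0 a) (measure_ne_top μ _)
  have hCS : ∀ s, (∑ a, πe a * (r s a - m a)) ^ 2 ≤
      ∑ a, μ.real (A ⁻¹' {a}) * (πe a / μ.real (A ⁻¹' {a}) * (r s a - m a)) ^ 2 := fun s => by
    simpa [sum_measureReal_preimage_singleton_eq_one hA] using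
      Finset.sum_sq_le_sum_mul_sum_of_sq_le_mul Finset.univ (fun a _ => (hq a).le)
        (fun a _ => mul_nonneg (hq a).le (sq_nonneg _))
        (r := fun a => πe a * (r s a - m a)) (fun a _ => le_of_eq (by field_simp [(hq a).ne']))
  calc var μ (fun ω => ∑ a, πe a * r (S ω) a)
      ≤ ∫ ω, (∑ a, πe a * r (S ω) a - ∑ a, πe a * m a) ^ 2 ∂μ :=
        var_le_integral_sub_sq (memLp_comp_of_fintype hS (fun s => ∑ a, πe a * r s a) 2) _
    _ = ∑ s, μ.real (S ⁻¹' {s}) * (∑ a, πe a * (r s a - m a)) ^ 2 := by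
        rw [integral_comp_of_fintype hS fun s => (∑ a, πe a * r s a - ∑ a, πe a * m a) ^ 2]
        simp only [mul_sub, Finset.sum_sub_distrib]
    _ ≤ ∑ s, μ.real (S ⁻¹' {s}) *
          ∑ a, μ.real (A ⁻¹' {a}) * (πe a / μ.real (A ⁻¹' {a}) * (r s a - m a)) ^ 2 := by
        gcongr with s
        exact hCS s
    _ = _ := by
        rw [hind.integral_comp₂_eq_sum hS hA
          fun s a => (πe a / μ.real (A ⁻¹' {a}) * (r s a - m a)) ^ 2]
        simp only [Finset.mul_sum, mul_assoc]

end Independence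

theorem stmt_11_general {Ω : Type*} [MeasurableSpace Ω] (μ : Measure Ω) [IsProbabilityMeasure μ]
    {𝒮 𝒜 : Type*} [Fintype 𝒮] [Fintype 𝒜]
    [MeasurableSpace 𝒮] [MeasurableSingletonClass 𝒮]
    [MeasurableSpace 𝒜] [MeasurableSingletonClass 𝒜]
    (S : Ω → 𝒮) (A : Ω → 𝒜) (hS : Measurable S) (hA : Measurable A)
    (hindep : ProbabilityTheory.IndepFun S A μ)
    (hApos : ∀ a, 0 < μ {ω | A ω = a})
    (R : Ω → ℝ) (hR : MemLp R 2 μ)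
    (m : 𝒜 → ℝ)
    (hm : ∀ a, m a =
      (∫ ω, Set.indicator {ω' | A ω' = a} R ω ∂μ) / (μ {ω | A ω = a}).toReal)
    (r : 𝒮 → 𝒜 → ℝ)
    (hr : ∀ s a, r s a =
      (∫ ω, Set.indicator {ω' | S ω' = s ∧ A ω' = a} R ω ∂μ) /
        (μ {ω | S ω = s ∧ A ω = a}).toReal)
    (πb : 𝒜 → ℝ) (hπb : ∀ a, πb a = (μ {ω | A ω = a}).toReal)
    (πe : 𝒜 → ℝ)
    (W : Ω → ℝ) (hW : ∀ ω, W ω = πe (A ω) / πb (A ω)) :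
    var μ (fun ω => ∑ a, πe a * r (S ω) a) +
        var μ (fun ω => W ω * (R ω - r (S ω) (A ω))) ≤
      var μ (fun ω => W ω * (R ω - m (A ω))) := by
  set w : 𝒜 → ℝ := fun a => πe a / μ.real (A ⁻¹' {a})
  obtain rfl : W = fun ω => w (A ω) := funext fun ω => by rw [hW, hπb]; rfl
  have hSA : Measurable fun ω => (S ω, A ω) := hS.prodMk hA
  have hRint : Integrable R μ := hR.integrable one_le_two
  have horth_r (ψ : 𝒮 × 𝒜 → ℝ) : ∫ ω, ψ (S ω, A ω) * (R ω - r (S ω) (A ω)) ∂μ = 0 :=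
    integral_comp_mul_sub_condMean_eq_zero hSA hRint (fun x => r x.1 x.2)
      (fun ⟨s, a⟩ => by simpa only [Prod.mk.injEq] using hr s a) ψ
  have hmean_r : ∫ ω, w (A ω) * (R ω - r (S ω) (A ω)) ∂μ = 0 := horth_r fun x => w x.2
  have hmean_m : ∫ ω, w (A ω) * (R ω - m (A ω)) ∂μ = 0 :=
    integral_comp_mul_sub_condMean_eq_zero hA hRint m hm w
  have hcross : ∫ ω, w (A ω) * (R ω - r (S ω) (A ω)) * (w (A ω) * (r (S ω) (A ω) - m (A ω))) ∂μ
      = 0 := by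
    rw [← horth_r fun x => w x.2 ^ 2 * (r x.1 x.2 - m x.2)]
    congr 1 with ω
    ring
  have hL2_r : MemLp (fun ω => w (A ω) * (R ω - r (S ω) (A ω))) 2 μ :=
    (hR.sub (memLp_comp_of_fintype hSA (fun x => r x.1 x.2) 2)).mul'
      (memLp_comp_of_fintype hA w ⊤)
  have hpyth : ∫ ω, (w (A ω) * (R ω - m (A ω))) ^ 2 ∂μ =
      ∫ ω, (w (A ω) * (R ω - r (S ω) (A ω))) ^ 2 ∂μ +
        ∫ ω, (w (A ω) * (r (S ω) (A ω) - m (A ω))) ^ 2 ∂μ := by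
    rw [← integral_add_sq_of_integral_mul_eq_zero hL2_r
      (memLp_comp_of_fintype hSA (fun x => w x.2 * (r x.1 x.2 - m x.2)) 2) hcross]
    congr 1 with ω
    ring
  rw [var_eq_integral_sq_of_integral_eq_zero hmean_r,
    var_eq_integral_sq_of_integral_eq_zero hmean_m, hpyth, add_comm]
  gcongr
  exact var_sum_mul_le_integral_sq hS hA hindep (fun a => (hApos a).ne') πe r m

/-- First inequality of Lemma 3.1: with `S ⟂ A`, `W = π_e(A)/π_b(A)`,
`Var(∑ₐ π_e(a) r(S,a)) + Var(W (R − r(S,A))) ≤ Var(W (R − μ(A)))`. -/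
theorem stmt_11 {Ω : Type*} [MeasurableSpace Ω] (μ : Measure Ω) [IsProbabilityMeasure μ]
    {𝒮 𝒜 : Type*} [Fintype 𝒮] [Nonempty 𝒮] [Fintype 𝒜] [Nonempty 𝒜]
    [MeasurableSpace 𝒮] [MeasurableSingletonClass 𝒮]
    [MeasurableSpace 𝒜] [MeasurableSingletonClass 𝒜]
    (S : Ω → 𝒮) (A : Ω → 𝒜) (hS : Measurable S) (hA : Measurable A)
    (hindep : ProbabilityTheory.IndepFun S A μ)
    (hSpos : ∀ s, 0 < μ {ω | S ω = s}) (hApos : ∀ a, 0 < μ {ω | A ω = a})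
    (R : Ω → ℝ) (hR : MemLp R 2 μ)
    (m : 𝒜 → ℝ)
    (hm : ∀ a, m a =
      (∫ ω, Set.indicator {ω' | A ω' = a} R ω ∂μ) / (μ {ω | A ω = a}).toReal)
    (r : 𝒮 → 𝒜 → ℝ)
    (hr : ∀ s a, r s a =
      (∫ ω, Set.indicator {ω' | S ω' = s ∧ A ω' = a} R ω ∂μ) /
        (μ {ω | S ω = s ∧ A ω = a}).toReal)
    (πb : 𝒜 → ℝ) (hπb : ∀ a, πb a = (μ {ω | A ω = a}).toReal)
    (πe : 𝒜 → ℝ) (hπenn : ∀ a, 0 ≤ πe a) (hπesum : ∑ a, πe a = 1)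
    (W : Ω → ℝ) (hW : ∀ ω, W ω = πe (A ω) / πb (A ω)) :
    var μ (fun ω => ∑ a, πe a * r (S ω) a) +
        var μ (fun ω => W ω * (R ω - r (S ω) (A ω))) ≤
      var μ (fun ω => W ω * (R ω - m (A ω))) :=
  stmt_11_general μ S A hS hA hindep hApos R hR m hm r hr πb hπb πe W hW
end

section
/- Let 𝒜 be a finite nonempty type, n ≥ 1, and let (a_i, r_i) ∈ 𝒜 × ℝ for i ∈ Fin n be data such that n(a) := #{i : a_i = a} > 0 for every a ∈ 𝒜. Set π̂(a) = n(a)/n and r̂(a) = (∑_{i : a_i = a} r_i) / n(a), and let π_e : 𝒜 → ℝ be any function. Then (1/n)·∑_{i} (π_e(a_i)/π̂(a_i))·r_i = ∑_{a ∈ 𝒜} π_e(a)·r̂(a) + (1/n)·∑_{i} (π_e(a_i)/π̂(a_i))·(r_i − r̂(a_i)), and moreover ∑_{i} (π_e(a_i)/π̂(a_i))·(r_i − r̂(a_i)) = 0, so the left-hand side equals ∑_{a ∈ 𝒜} π_e(a)·r̂(a). -/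
open Finset

private theorem stmt_12_aux (p s c nn : ℝ) (h1 : nn ≠ 0) :
    1/nn * (p / (c/nn) * s) = p * (s/c) := by
  rw [div_div_eq_mul_div, div_mul_eq_mul_div, one_mul, div_mul_eq_mul_div, div_div,
    mul_comm c nn, ← div_div, mul_right_comm p nn s, mul_div_cancel_right₀ _ h1, mul_div_assoc]

/-- The IS estimator with the context-agnostic estimated behavior policy
`π̂(a) = n(a)/n` equals the direct-method estimator `∑ₐ π_e(a) r̂(a)` plus an augmentation
term that vanishes identically. -/
theorem stmt_12 {𝒜 : Type*} [Fintype 𝒜] [Nonempty 𝒜] [DecidableEq 𝒜]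
    (n : ℕ) (hn : 1 ≤ n) (a : Fin n → 𝒜) (r : Fin n → ℝ)
    (cnt : 𝒜 → ℕ) (hcnt : ∀ x, cnt x = (Finset.univ.filter fun i => a i = x).card)
    (hpos : ∀ x, 0 < cnt x)
    (πhat : 𝒜 → ℝ) (hπhat : ∀ x, πhat x = (cnt x : ℝ) / (n : ℝ))
    (rhat : 𝒜 → ℝ)
    (hrhat : ∀ x, rhat x =
      (∑ i ∈ Finset.univ.filter (fun i => a i = x), r i) / (cnt x : ℝ))
    (πe : 𝒜 → ℝ) :
    ((1 : ℝ) / n) * ∑ i, (πe (a i) / πhat (a i)) * r i =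
        (∑ x, πe x * rhat x) +
          ((1 : ℝ) / n) * ∑ i, (πe (a i) / πhat (a i)) * (r i - rhat (a i)) ∧
    (∑ i, (πe (a i) / πhat (a i)) * (r i - rhat (a i))) = 0 ∧
    ((1 : ℝ) / n) * ∑ i, (πe (a i) / πhat (a i)) * r i = ∑ x, πe x * rhat x := by
  have hn0 : (n : ℝ) ≠ 0 := by positivity
  have hcnt0 : ∀ x, (cnt x : ℝ) ≠ 0 := fun x => by
    exact_mod_cast (hpos x).ne'
  -- sum over each fiber of (r i - rhat x) is zero
  have hfib : ∀ x, ∑ i ∈ Finset.univ.filter (fun i => a i = x), (r i - rhat (a i)) = 0 := by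
    intro x
    have : ∑ i ∈ Finset.univ.filter (fun i => a i = x), (r i - rhat (a i))
        = (∑ i ∈ Finset.univ.filter (fun i => a i = x), r i) - (cnt x : ℝ) * rhat x := by
      rw [Finset.sum_sub_distrib]
      congr 1
      rw [Finset.sum_congr rfl (fun i hi => by
        simp only [Finset.mem_filter] at hi; rw [hi.2]),
        Finset.sum_const, hcnt x, nsmul_eq_mul]
    rw [this, hrhat x, mul_div_cancel₀ _ (hcnt0 x), sub_self]
  have haug : (∑ i, (πe (a i) / πhat (a i)) * (r i - rhat (a i))) = 0 := by
    rw [← Finset.sum_fiberwise (g := a) (s := Finset.univ)]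
    apply Finset.sum_eq_zero
    intro x _
    have : ∑ i ∈ Finset.univ.filter (fun i => a i = x),
        (πe (a i) / πhat (a i)) * (r i - rhat (a i))
        = (πe x / πhat x) * ∑ i ∈ Finset.univ.filter (fun i => a i = x), (r i - rhat (a i)) := by
      rw [Finset.mul_sum]
      apply Finset.sum_congr rfl
      intro i hi
      simp only [Finset.mem_filter] at hi
      rw [hi.2]
    rw [this, hfib x, mul_zero]
  have hmain : ((1 : ℝ) / n) * ∑ i, (πe (a i) / πhat (a i)) * r i = ∑ x, πe x * rhat x := by
    rw [← Finset.sum_fiberwise (g := a) (s := Finset.univ)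
      (f := fun i => (πe (a i) / πhat (a i)) * r i), Finset.mul_sum]
    apply Finset.sum_congr rfl
    intro x _
    have h1 : ∑ i ∈ Finset.univ.filter (fun i => a i = x),
        (πe (a i) / πhat (a i)) * r i
        = (πe x / πhat x) * ∑ i ∈ Finset.univ.filter (fun i => a i = x), r i := by
      rw [Finset.mul_sum]
      apply Finset.sum_congr rfl
      intro i hi
      simp only [Finset.mem_filter] at hi
      rw [hi.2]
    rw [h1, hπhat x, hrhat x]
    exact stmt_12_aux _ _ _ _ hn0
  exact ⟨by rw [hmain, haug, mul_zero, add_zero], haug, hmain⟩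
end

section
/- Let 𝒮 and 𝒜 be finite nonempty types, n ≥ 1, and let (s_i, a_i, r_i) ∈ 𝒮 × 𝒜 × ℝ for i ∈ Fin n be data. Let n(s) := #{i : s_i = s} and n(s, a) := #{i : s_i = s, a_i = a}, and assume n(s, a) > 0 for every s with n(s) > 0 and every a ∈ 𝒜. Set π̂(a|s) = n(s, a)/n(s) and r̂(s, a) = (∑_{i : s_i = s, a_i = a} r_i) / n(s, a), and let π_e : 𝒜 → ℝ be any function. Then (1/n)·∑_{i} (π_e(a_i)/π̂(a_i|s_i))·r_i = (1/n)·∑_{i} [ ∑_{a ∈ 𝒜} π_e(a)·r̂(s_i, a) + (π_e(a_i)/π̂(a_i|s_i))·(r_i − r̂(s_i, a_i)) ], and moreover ∑_{i} (π_e(a_i)/π̂(a_i|s_i))·(r_i − r̂(s_i, a_i)) = 0, so the left-hand side equals (1/n)·∑_{i} ∑_{a ∈ 𝒜} π_e(a)·r̂(s_i, a). -/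
/-!
Group the samples by their (context, action) pair. On each group the estimate `r̂` is the
group mean, so the augmentation term contributes the group's weight times a sum of centred
rewards, which is zero. For the remaining identity group by context `x`: the weight
`π_e(y) / π̂(y|x) = π_e(y) n(x) / n(x, y)` turns the `n(x, y)` samples with action `y` into
`n(x) π_e(y) r̂(x, y)`, which is what the `n(x)` samples with context `x` contribute to the
direct-method term, provided every action occurs in every observed context.
-/

open Finset

section

variable {ι κ : Type*}

theorem Finset.sum_sub_sum_div_card (T : Finset ι) (r : ι → ℝ) :
    ∑ i ∈ T, (r i - (∑ j ∈ T, r j) / #T) = 0 := by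
  rcases T.eq_empty_or_nonempty with rfl | hT
  · simp
  · rw [sum_sub_distrib, sum_const, nsmul_eq_mul, mul_div_cancel₀ _ (by positivity), sub_self]

variable [Fintype ι] [DecidableEq κ]

theorem sum_mul_sub_fiber_mean_eq_zero (key : ι → κ) (w : κ → ℝ) (r : ι → ℝ) :
    ∑ i, w (key i) * (r i - (∑ j with key j = key i, r j) / #{j | key j = key i}) = 0 := by
  rw [← sum_fiberwise_of_maps_to (t := univ.image key) fun i _ =>
    mem_image_of_mem key (mem_univ i)]
  refine sum_eq_zero fun k _ => ?_
  calc _ = w k * ∑ i with key i = k, (r i - (∑ j with key j = k, r j) / #{j | key j = k}) := by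
        rw [mul_sum]
        exact sum_congr rfl fun i hi => by rw [(mem_filter.1 hi).2]
    _ = 0 := by rw [sum_sub_sum_div_card, mul_zero]

theorem sum_div_card_fiber_eq_sum_image (key : ι → κ) (g : κ → ℝ) :
    ∑ i, g (key i) / #{j | key j = key i} = ∑ k ∈ univ.image key, g k := by
  rw [sum_comp (fun k => g k / #{j | key j = k}) key]
  refine sum_congr rfl fun k hk => ?_
  obtain ⟨i, -, rfl⟩ := mem_image.1 hk
  have hfiber : (#{j | key j = key i} : ℝ) ≠ 0 :=
    Nat.cast_ne_zero.2 (card_ne_zero_of_mem (mem_filter.2 ⟨mem_univ i, rfl⟩))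
  rw [nsmul_eq_mul, mul_div_cancel₀ _ hfiber]

theorem sum_div_empirical_propensity_eq_sum_sum {𝒮 𝒜 : Type*} [Fintype 𝒜]
    [DecidableEq 𝒮] [DecidableEq 𝒜]
    (s : ι → 𝒮) (a : ι → 𝒜) (F : 𝒮 → 𝒜 → ℝ) (hcover : ∀ i y, ∃ j, s j = s i ∧ a j = y) :
    ∑ i, F (s i) (a i) / ((#{j | s j = s i ∧ a j = a i} : ℝ) / #{j | s j = s i}) =
      ∑ i, ∑ y, F (s i) y := by
  have himage : univ.image (fun i => (s i, a i)) = univ.image s ×ˢ univ := by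
    ext ⟨x, y⟩
    simp only [mem_image, mem_univ, true_and, mem_product, and_true, Prod.mk.injEq]
    exact ⟨fun ⟨i, hi, _⟩ => ⟨i, hi⟩, fun ⟨i, hi⟩ => by simpa [hi] using hcover i y⟩
  calc ∑ i, F (s i) (a i) / ((#{j | s j = s i ∧ a j = a i} : ℝ) / #{j | s j = s i})
      = ∑ i, (fun k : 𝒮 × 𝒜 => F k.1 k.2 * #{j | s j = k.1}) (s i, a i) /
          #{j | (s j, a j) = (s i, a i)} := by
        simp only [div_div_eq_mul_div, Prod.mk.injEq]
    _ = ∑ k ∈ univ.image (fun i => (s i, a i)), F k.1 k.2 * #{j | s j = k.1} :=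
        sum_div_card_fiber_eq_sum_image (fun i => (s i, a i))
          fun k => F k.1 k.2 * #{j | s j = k.1}
    _ = ∑ x ∈ univ.image s, #{j | s j = x} • ∑ y, F x y := by
        rw [himage, sum_product]
        exact sum_congr rfl fun x _ => by rw [nsmul_eq_mul, mul_sum]; simp only [mul_comm]
    _ = ∑ i, ∑ y, F (s i) y := (sum_comp _ _).symm

end

theorem stmt_13_general {𝒮 𝒜 : Type*} [Fintype 𝒜]
    [DecidableEq 𝒮] [DecidableEq 𝒜]
    (n : ℕ) (s : Fin n → 𝒮) (a : Fin n → 𝒜) (r : Fin n → ℝ)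
    (cntS : 𝒮 → ℕ) (hcntS : ∀ x, cntS x = (Finset.univ.filter fun i => s i = x).card)
    (cnt : 𝒮 → 𝒜 → ℕ)
    (hcnt : ∀ x y, cnt x y = (Finset.univ.filter fun i => s i = x ∧ a i = y).card)
    (hpos : ∀ x, 0 < cntS x → ∀ y, 0 < cnt x y)
    (πhat : 𝒮 → 𝒜 → ℝ) (hπhat : ∀ x y, πhat x y = (cnt x y : ℝ) / (cntS x : ℝ))
    (rhat : 𝒮 → 𝒜 → ℝ)
    (hrhat : ∀ x y, rhat x y =
      (∑ i ∈ Finset.univ.filter (fun i => s i = x ∧ a i = y), r i) / (cnt x y : ℝ))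
    (πe : 𝒜 → ℝ) :
    ((1 : ℝ) / n) * ∑ i, (πe (a i) / πhat (s i) (a i)) * r i =
        ((1 : ℝ) / n) * ∑ i, ((∑ y, πe y * rhat (s i) y) +
          (πe (a i) / πhat (s i) (a i)) * (r i - rhat (s i) (a i))) ∧
    (∑ i, (πe (a i) / πhat (s i) (a i)) * (r i - rhat (s i) (a i))) = 0 ∧
    ((1 : ℝ) / n) * ∑ i, (πe (a i) / πhat (s i) (a i)) * r i =
      ((1 : ℝ) / n) * ∑ i, ∑ y, πe y * rhat (s i) y := by
  have augmentation_eq_zero :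
      ∑ i, (πe (a i) / πhat (s i) (a i)) * (r i - rhat (s i) (a i)) = 0 := by
    have hfibers := sum_mul_sub_fiber_mean_eq_zero (fun i => (s i, a i))
      (fun k => πe k.2 / πhat k.1 k.2) r
    simp only [Prod.mk.injEq] at hfibers
    simpa only [hrhat, hcnt] using hfibers
  have hcover : ∀ i y, ∃ j, s j = s i ∧ a j = y := by
    intro i y
    have hcontext : 0 < cntS (s i) := by
      rw [hcntS]
      exact card_pos.2 ⟨i, mem_filter.2 ⟨mem_univ i, rfl⟩⟩
    obtain ⟨j, hj⟩ := card_pos.1 (hcnt _ y ▸ hpos _ hcontext y)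
    exact ⟨j, (mem_filter.1 hj).2⟩
  have ips_eq_dm : ∑ i, (πe (a i) / πhat (s i) (a i)) * r i = ∑ i, ∑ y, πe y * rhat (s i) y := by
    calc ∑ i, (πe (a i) / πhat (s i) (a i)) * r i
        = ∑ i, (πe (a i) / πhat (s i) (a i)) * rhat (s i) (a i) := by
          rw [← sub_eq_zero, ← sum_sub_distrib]
          simpa only [mul_sub] using augmentation_eq_zero
      _ = ∑ i, ∑ y, πe y * rhat (s i) y := by
          simp only [hπhat, hcnt, hcntS, div_mul_eq_mul_div]
          exact sum_div_empirical_propensity_eq_sum_sum s a (fun x y => πe y * rhat x y) hcover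
  refine ⟨?_, augmentation_eq_zero, by rw [ips_eq_dm]⟩
  rw [sum_add_distrib, augmentation_eq_zero, add_zero, ips_eq_dm]

/-- The IS estimator with the context-dependent estimated behavior policy
`π̂(a|s) = n(s,a)/n(s)` equals the doubly robust estimator consisting of the direct-method
term averaging `∑ₐ π_e(a) r̂(sᵢ, a)` plus an augmentation term that vanishes identically. -/
theorem stmt_13 {𝒮 𝒜 : Type*} [Fintype 𝒮] [Nonempty 𝒮] [Fintype 𝒜] [Nonempty 𝒜]
    [DecidableEq 𝒮] [DecidableEq 𝒜]
    (n : ℕ) (hn : 1 ≤ n) (s : Fin n → 𝒮) (a : Fin n → 𝒜) (r : Fin n → ℝ)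
    (cntS : 𝒮 → ℕ) (hcntS : ∀ x, cntS x = (Finset.univ.filter fun i => s i = x).card)
    (cnt : 𝒮 → 𝒜 → ℕ)
    (hcnt : ∀ x y, cnt x y = (Finset.univ.filter fun i => s i = x ∧ a i = y).card)
    (hpos : ∀ x, 0 < cntS x → ∀ y, 0 < cnt x y)
    (πhat : 𝒮 → 𝒜 → ℝ) (hπhat : ∀ x y, πhat x y = (cnt x y : ℝ) / (cntS x : ℝ))
    (rhat : 𝒮 → 𝒜 → ℝ)
    (hrhat : ∀ x y, rhat x y =
      (∑ i ∈ Finset.univ.filter (fun i => s i = x ∧ a i = y), r i) / (cnt x y : ℝ))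
    (πe : 𝒜 → ℝ) :
    ((1 : ℝ) / n) * ∑ i, (πe (a i) / πhat (s i) (a i)) * r i =
        ((1 : ℝ) / n) * ∑ i, ((∑ y, πe y * rhat (s i) y) +
          (πe (a i) / πhat (s i) (a i)) * (r i - rhat (s i) (a i))) ∧
    (∑ i, (πe (a i) / πhat (s i) (a i)) * (r i - rhat (s i) (a i))) = 0 ∧
    ((1 : ℝ) / n) * ∑ i, (πe (a i) / πhat (s i) (a i)) * r i =
      ((1 : ℝ) / n) * ∑ i, ∑ y, πe y * rhat (s i) y :=
  stmt_13_general n s a r cntS hcntS cnt hcnt hpos πhat hπhat rhat hrhat πe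
end

section
/- In the finite-horizon MDP setting, for every t ∈ {0,…,T}: ∑_h p_{π_b}(h) · λ_t(h) · r(s_t(h), a_t(h)) = ∑_h p_{π_e}(h) · r(s_t(h), a_t(h)); consequently, ∑_h p_{π_b}(h) · ∑_{t=0}^{T} γ^t λ_t(h) r(s_t(h), a_t(h)) = v(π_e). -/
open Finset

lemma key_sis {𝒮 𝒜 : Type*} [Fintype 𝒮] [Fintype 𝒜]
    (P : 𝒮 → 𝒜 → 𝒮 → ℝ) (hPsum : ∀ s a, ∑ s', P s a s' = 1) :
    ∀ (m t : ℕ) (ht : t ≤ m) (μ0 : 𝒮 → ℝ) (Q1 Q2 : ℕ → 𝒮 → 𝒜 → ℝ)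
      (g : 𝒮 × 𝒜 → ℝ),
      (∀ j, j ≤ t → Q1 j = Q2 j) →
      (∀ j s, t < j → ∑ a, Q1 j s a = 1) →
      (∀ j s, t < j → ∑ a, Q2 j s a = 1) →
      ∑ h : Fin (m + 1) → 𝒮 × 𝒜,
          μ0 (h 0).1 * (∏ j : Fin (m + 1), Q1 j (h j).1 (h j).2) *
            (∏ i : Fin m, P (h i.castSucc).1 (h i.castSucc).2 (h i.succ).1) *
            g (h ⟨t, Nat.lt_succ_of_le ht⟩) =
        ∑ h : Fin (m + 1) → 𝒮 × 𝒜,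
          μ0 (h 0).1 * (∏ j : Fin (m + 1), Q2 j (h j).1 (h j).2) *
            (∏ i : Fin m, P (h i.castSucc).1 (h i.castSucc).2 (h i.succ).1) *
            g (h ⟨t, Nat.lt_succ_of_le ht⟩) := by
  intro m
  induction m with
  | zero =>
    intro t ht μ0 Q1 Q2 g hagree _ _
    interval_cases t
    apply Finset.sum_congr rfl
    intro h _
    have : ∀ j : Fin 1, Q1 (j : ℕ) = Q2 (j : ℕ) := fun j => hagree _ (by omega)
    simp only [this]
  | succ m ih =>
    intro t ht μ0 Q1 Q2 g hagree hsum hsum'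
    rcases eq_or_lt_of_le ht with rfl | htm
    · apply Finset.sum_congr rfl
      intro h _
      have : ∀ j : Fin (m + 2), Q1 (j : ℕ) = Q2 (j : ℕ) := fun j =>
        hagree _ (Nat.lt_succ_iff.mp j.isLt)
      simp only [this]
    · have htm' : t ≤ m := Nat.lt_succ_iff.mp htm
      -- sum out the last coordinate using snoc
      have split : ∀ (Θ : ℕ → 𝒮 → 𝒜 → ℝ), (∀ s, ∑ a, Θ (m+1) s a = 1) →
          ∑ h : Fin (m + 2) → 𝒮 × 𝒜,
            μ0 (h 0).1 * (∏ j : Fin (m + 2), Θ j (h j).1 (h j).2) *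
              (∏ i : Fin (m+1), P (h i.castSucc).1 (h i.castSucc).2 (h i.succ).1) *
              g (h ⟨t, Nat.lt_succ_of_le ht⟩) =
          ∑ h : Fin (m + 1) → 𝒮 × 𝒜,
            μ0 (h 0).1 * (∏ j : Fin (m + 1), Θ j (h j).1 (h j).2) *
              (∏ i : Fin m, P (h i.castSucc).1 (h i.castSucc).2 (h i.succ).1) *
              g (h ⟨t, Nat.lt_succ_of_le htm'⟩) := by
        intro Θ hΘ
        rw [← Equiv.sum_comp (Fin.snocEquiv (fun _ => 𝒮 × 𝒜)), Fintype.sum_prod_type_right]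
        apply Finset.sum_congr rfl
        intro h _
        have hsnoc : ∀ (x : 𝒮 × 𝒜) (j : Fin (m+1)),
            (Fin.snocEquiv (fun _ => 𝒮 × 𝒜)) (x, h) j.castSucc = h j := by
          intro x j; simp [Fin.snocEquiv, Fin.snoc_castSucc]
        have hlast : ∀ (x : 𝒮 × 𝒜),
            (Fin.snocEquiv (fun _ => 𝒮 × 𝒜)) (x, h) (Fin.last (m+1)) = x := by
          intro x; simp [Fin.snocEquiv]
        -- compute each factor
        have e0 : ∀ x : 𝒮 × 𝒜, ((Fin.snocEquiv (fun _ => 𝒮 × 𝒜)) (x, h) 0).1 = (h 0).1 := by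
          intro x
          have : (0 : Fin (m+2)) = (0 : Fin (m+1)).castSucc := rfl
          rw [this, hsnoc]
        have eQ : ∀ x : 𝒮 × 𝒜,
            (∏ j : Fin (m + 2), Θ j (((Fin.snocEquiv (fun _ => 𝒮 × 𝒜)) (x, h)) j).1
              (((Fin.snocEquiv (fun _ => 𝒮 × 𝒜)) (x, h)) j).2) =
            (∏ j : Fin (m + 1), Θ j (h j).1 (h j).2) * Θ (m+1) x.1 x.2 := by
          intro x
          rw [Fin.prod_univ_castSucc]
          simp only [hsnoc, hlast, Fin.coe_castSucc, Fin.val_last]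
        have eP : ∀ x : 𝒮 × 𝒜,
            (∏ i : Fin (m+1), P (((Fin.snocEquiv (fun _ => 𝒮 × 𝒜)) (x, h)) i.castSucc).1
              (((Fin.snocEquiv (fun _ => 𝒮 × 𝒜)) (x, h)) i.castSucc).2
              (((Fin.snocEquiv (fun _ => 𝒮 × 𝒜)) (x, h)) i.succ).1) =
            (∏ i : Fin m, P (h i.castSucc).1 (h i.castSucc).2 (h i.succ).1) *
              P (h (Fin.last m)).1 (h (Fin.last m)).2 x.1 := by
          intro x
          rw [Fin.prod_univ_castSucc]
          simp only [Fin.succ_castSucc, Fin.succ_last, hsnoc, hlast]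
        have eg : ∀ x : 𝒮 × 𝒜,
            ((Fin.snocEquiv (fun _ => 𝒮 × 𝒜)) (x, h)) ⟨t, Nat.lt_succ_of_le ht⟩ =
              h ⟨t, Nat.lt_succ_of_le htm'⟩ := by
          intro x
          have : (⟨t, Nat.lt_succ_of_le ht⟩ : Fin (m+2)) =
              (⟨t, Nat.lt_succ_of_le htm'⟩ : Fin (m+1)).castSucc := rfl
          rw [this, hsnoc]
        calc ∑ x : 𝒮 × 𝒜, _ = ∑ x : 𝒮 × 𝒜,
              (μ0 (h 0).1 * (∏ j : Fin (m + 1), Θ j (h j).1 (h j).2) *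
                (∏ i : Fin m, P (h i.castSucc).1 (h i.castSucc).2 (h i.succ).1) *
                g (h ⟨t, Nat.lt_succ_of_le htm'⟩)) *
              (P (h (Fin.last m)).1 (h (Fin.last m)).2 x.1 * Θ (m+1) x.1 x.2) := by
              apply Finset.sum_congr rfl
              intro x _
              rw [e0, eQ, eP, eg]
              ring
          _ = _ := by
              rw [← Finset.mul_sum]
              have : ∑ x : 𝒮 × 𝒜, P (h (Fin.last m)).1 (h (Fin.last m)).2 x.1 * Θ (m+1) x.1 x.2
                  = 1 := by
                rw [Fintype.sum_prod_type]
                simp only [← Finset.mul_sum, hΘ, mul_one]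
                exact hPsum _ _
              rw [this, mul_one]
      rw [split Q1 (fun s => hsum (m+1) s (by omega)),
          split Q2 (fun s => hsum' (m+1) s (by omega))]
      exact ih t htm' μ0 Q1 Q2 g hagree
        (fun j s hj => hsum j s hj) (fun j s hj => hsum' j s hj)


/-- Probability of a horizon-`T` trajectory `h = (s₀,a₀,…,s_T,a_T)` under initial
distribution `μ0`, transitions `P` and policy `π`. -/
noncomputable def trajProb {𝒮 𝒜 : Type*} (T : ℕ) (μ0 : 𝒮 → ℝ)
    (P : 𝒮 → 𝒜 → 𝒮 → ℝ) (π : 𝒮 → 𝒜 → ℝ) (h : Fin (T + 1) → 𝒮 × 𝒜) : ℝ :=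
  μ0 (h 0).1 * (∏ t : Fin (T + 1), π (h t).1 (h t).2) *
    ∏ t : Fin T, P (h t.castSucc).1 (h t.castSucc).2 (h t.succ).1

/-- Cumulative importance ratio `λ_t(h) = ∏_{j ≤ t} π_e(s_j)(a_j) / π_b(s_j)(a_j)`. -/
noncomputable def cumRatio {𝒮 𝒜 : Type*} (T : ℕ) (πb πe : 𝒮 → 𝒜 → ℝ)
    (t : Fin (T + 1)) (h : Fin (T + 1) → 𝒮 × 𝒜) : ℝ :=
  ∏ j ∈ Finset.Iic t, πe (h j).1 (h j).2 / πb (h j).1 (h j).2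

/-- Unbiasedness of the sequential importance sampling estimator: for each `t`,
`∑ₕ p_{π_b}(h) λ_t(h) r(sₜ,aₜ) = ∑ₕ p_{π_e}(h) r(sₜ,aₜ)`, and consequently
`∑ₕ p_{π_b}(h) ∑ₜ γ^t λ_t(h) r(sₜ,aₜ) = v(π_e)`. -/

theorem stmt_15 {𝒮 𝒜 : Type*} [Fintype 𝒮] [Nonempty 𝒮] [Fintype 𝒜] [Nonempty 𝒜]
    [DecidableEq 𝒮] [DecidableEq 𝒜]
    (T : ℕ) (γ : ℝ) (μ0 : 𝒮 → ℝ) (P : 𝒮 → 𝒜 → 𝒮 → ℝ) (r : 𝒮 → 𝒜 → ℝ)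
    (hμ0 : ∀ s, 0 ≤ μ0 s) (hμ0sum : ∑ s, μ0 s = 1)
    (hP : ∀ s a s', 0 ≤ P s a s') (hPsum : ∀ s a, ∑ s', P s a s' = 1)
    (πb πe : 𝒮 → 𝒜 → ℝ)
    (hπb : ∀ s a, 0 < πb s a) (hπbsum : ∀ s, ∑ a, πb s a = 1)
    (hπe : ∀ s a, 0 ≤ πe s a) (hπesum : ∀ s, ∑ a, πe s a = 1) :
    (∀ t : Fin (T + 1),
      ∑ h : Fin (T + 1) → 𝒮 × 𝒜,
          trajProb T μ0 P πb h * cumRatio T πb πe t h * r (h t).1 (h t).2 =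
        ∑ h : Fin (T + 1) → 𝒮 × 𝒜, trajProb T μ0 P πe h * r (h t).1 (h t).2) ∧
    ∑ h : Fin (T + 1) → 𝒮 × 𝒜,
        trajProb T μ0 P πb h *
          ∑ t : Fin (T + 1), γ ^ (t : ℕ) * cumRatio T πb πe t h * r (h t).1 (h t).2 =
      ∑ h : Fin (T + 1) → 𝒮 × 𝒜,
        trajProb T μ0 P πe h *
          ∑ t : Fin (T + 1), γ ^ (t : ℕ) * r (h t).1 (h t).2 := by
  have first : ∀ t : Fin (T + 1),
      ∑ h : Fin (T + 1) → 𝒮 × 𝒜,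
          trajProb T μ0 P πb h * cumRatio T πb πe t h * r (h t).1 (h t).2 =
        ∑ h : Fin (T + 1) → 𝒮 × 𝒜, trajProb T μ0 P πe h * r (h t).1 (h t).2 := by
    intro t
    have hkey := key_sis P hPsum T (t : ℕ) (Fin.is_le t) μ0
      (fun j s a => if j ≤ (t : ℕ) then πe s a else πb s a) (fun _ => πe)
      (fun x => r x.1 x.2)
      (by intro j hj
          funext s a
          show (if j ≤ (t : ℕ) then πe s a else πb s a) = πe s a
          rw [if_pos hj])
      (by intro j s hj; simp [Nat.not_le_of_lt hj, hπbsum s])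
      (by intro j s hj; exact hπesum s)
    have hkey' :
        (∑ h : Fin (T + 1) → 𝒮 × 𝒜,
          μ0 (h 0).1 * (∏ j : Fin (T + 1),
              if (j : ℕ) ≤ (t : ℕ) then πe (h j).1 (h j).2 else πb (h j).1 (h j).2) *
            (∏ i : Fin T, P (h i.castSucc).1 (h i.castSucc).2 (h i.succ).1) *
            r (h t).1 (h t).2) =
        ∑ h : Fin (T + 1) → 𝒮 × 𝒜,
          μ0 (h 0).1 * (∏ j : Fin (T + 1), πe (h j).1 (h j).2) *
            (∏ i : Fin T, P (h i.castSucc).1 (h i.castSucc).2 (h i.succ).1) *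
            r (h t).1 (h t).2 := hkey
    have hIic : (Finset.univ.filter (fun j : Fin (T + 1) => (j : ℕ) ≤ (t : ℕ))) =
        Finset.Iic t := by
      ext j
      simp only [Finset.mem_filter, Finset.mem_univ, true_and, Finset.mem_Iic, Fin.le_def]
    have hpt : ∀ h : Fin (T + 1) → 𝒮 × 𝒜,
        trajProb T μ0 P πb h * cumRatio T πb πe t h =
        μ0 (h 0).1 * (∏ j : Fin (T + 1),
            if (j : ℕ) ≤ (t : ℕ) then πe (h j).1 (h j).2 else πb (h j).1 (h j).2) *
          (∏ i : Fin T, P (h i.castSucc).1 (h i.castSucc).2 (h i.succ).1) := by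
      intro h
      simp only [trajProb, cumRatio]
      have h1 : (∏ j : Fin (T + 1),
          if (j : ℕ) ≤ (t : ℕ) then πe (h j).1 (h j).2 else πb (h j).1 (h j).2) =
          (∏ j ∈ Finset.Iic t, πe (h j).1 (h j).2) *
            ∏ j ∈ (Finset.Iic t)ᶜ, πb (h j).1 (h j).2 := by
        rw [Finset.prod_ite]
        congr 1
        · rw [hIic]
        · congr 1
          rw [← hIic]
          ext j; simp
      have h2 : (∏ j : Fin (T + 1), πb (h j).1 (h j).2) =
          (∏ j ∈ Finset.Iic t, πb (h j).1 (h j).2) *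
            ∏ j ∈ (Finset.Iic t)ᶜ, πb (h j).1 (h j).2 :=
        (Finset.prod_mul_prod_compl _ _).symm
      have h3 : (∏ j ∈ Finset.Iic t, πb (h j).1 (h j).2) *
          (∏ j ∈ Finset.Iic t, πe (h j).1 (h j).2 / πb (h j).1 (h j).2) =
          ∏ j ∈ Finset.Iic t, πe (h j).1 (h j).2 := by
        rw [← Finset.prod_mul_distrib]
        apply Finset.prod_congr rfl
        intro j _
        rw [mul_comm, div_mul_cancel₀ _ (ne_of_gt (hπb _ _))]
      rw [h1, h2, ← h3]
      ring
    calc ∑ h : Fin (T + 1) → 𝒮 × 𝒜,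
            trajProb T μ0 P πb h * cumRatio T πb πe t h * r (h t).1 (h t).2
        = ∑ h : Fin (T + 1) → 𝒮 × 𝒜,
            μ0 (h 0).1 * (∏ j : Fin (T + 1),
                if (j : ℕ) ≤ (t : ℕ) then πe (h j).1 (h j).2 else πb (h j).1 (h j).2) *
              (∏ i : Fin T, P (h i.castSucc).1 (h i.castSucc).2 (h i.succ).1) *
              r (h t).1 (h t).2 :=
          Finset.sum_congr rfl (fun h _ => by rw [hpt h])
      _ = ∑ h : Fin (T + 1) → 𝒮 × 𝒜,
            μ0 (h 0).1 * (∏ j : Fin (T + 1), πe (h j).1 (h j).2) *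
              (∏ i : Fin T, P (h i.castSucc).1 (h i.castSucc).2 (h i.succ).1) *
              r (h t).1 (h t).2 := hkey'
      _ = ∑ h : Fin (T + 1) → 𝒮 × 𝒜, trajProb T μ0 P πe h * r (h t).1 (h t).2 :=
          Finset.sum_congr rfl (fun h _ => by simp [trajProb])
  refine ⟨first, ?_⟩
  simp only [Finset.mul_sum]
  rw [Finset.sum_comm]
  conv_rhs => rw [Finset.sum_comm]
  apply Finset.sum_congr rfl
  intro t _
  calc ∑ h : Fin (T + 1) → 𝒮 × 𝒜,
        trajProb T μ0 P πb h * (γ ^ (t : ℕ) * cumRatio T πb πe t h * r (h t).1 (h t).2)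
      = γ ^ (t : ℕ) * ∑ h : Fin (T + 1) → 𝒮 × 𝒜,
          trajProb T μ0 P πb h * cumRatio T πb πe t h * r (h t).1 (h t).2 := by
        rw [Finset.mul_sum]
        apply Finset.sum_congr rfl
        intro h _; ring
    _ = γ ^ (t : ℕ) * ∑ h : Fin (T + 1) → 𝒮 × 𝒜,
          trajProb T μ0 P πe h * r (h t).1 (h t).2 := by rw [first t]
    _ = ∑ h : Fin (T + 1) → 𝒮 × 𝒜,
          trajProb T μ0 P πe h * (γ ^ (t : ℕ) * r (h t).1 (h t).2) := by
        rw [Finset.mul_sum]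
        apply Finset.sum_congr rfl
        intro h _; ring
end

section
/- In the finite-horizon MDP setting, for every family of functions Q_t : 𝒮 → 𝒜 → ℝ (t ∈ {0,…,T}): ∑_h p_{π_b}(h) · ∑_{t=0}^{T} γ^t [ λ_t(h)·(r(s_t, a_t) − Q_t(s_t, a_t)) + λ_{t−1}(h)·∑_{a ∈ 𝒜} π_e(s_t)(a)·Q_t(s_t, a) ] = v(π_e). -/
open Finset

/-- Cumulative importance ratio `λ_{t−1}(h) = ∏_{j < t} π_e(s_j)(a_j) / π_b(s_j)(a_j)`,
with the convention `λ_{−1}(h) = 1`. -/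
noncomputable def cumRatioLt {𝒮 𝒜 : Type*} (T : ℕ) (πb πe : 𝒮 → 𝒜 → ℝ)
    (t : Fin (T + 1)) (h : Fin (T + 1) → 𝒮 × 𝒜) : ℝ :=
  ∏ j ∈ Finset.Iio t, πe (h j).1 (h j).2 / πb (h j).1 (h j).2

section DRaux

variable {𝒮 𝒜 : Type*} [Fintype 𝒮] [Fintype 𝒜]

noncomputable def gp (μ0 : 𝒮 → ℝ) (P : 𝒮 → 𝒜 → 𝒮 → ℝ) (w : ℕ → 𝒮 → 𝒜 → ℝ)
    (n : ℕ) (h : Fin (n + 1) → 𝒮 × 𝒜) : ℝ :=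
  μ0 (h 0).1 * (∏ t : Fin (n + 1), w t (h t).1 (h t).2) *
    ∏ t : Fin n, P (h t.castSucc).1 (h t.castSucc).2 (h t.succ).1

noncomputable def rho (μ0 : 𝒮 → ℝ) (P : 𝒮 → 𝒜 → 𝒮 → ℝ) (w : ℕ → 𝒮 → 𝒜 → ℝ) : ℕ → 𝒮 → ℝ
  | 0 => μ0
  | (t + 1) => fun s' => ∑ s, ∑ a, rho μ0 P w t s * w t s a * P s a s'

lemma rho_congr (μ0 : 𝒮 → ℝ) (P : 𝒮 → 𝒜 → 𝒮 → ℝ) (w w' : ℕ → 𝒮 → 𝒜 → ℝ) (t : ℕ)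
    (hww' : ∀ j, j < t → w j = w' j) : rho μ0 P w t = rho μ0 P w' t := by
  induction t with
  | zero => rfl
  | succ t ih =>
    have h1 : rho μ0 P w t = rho μ0 P w' t := ih fun j hj => hww' j (hj.trans (Nat.lt_succ_self t))
    funext s'
    simp only [rho, h1, hww' t (Nat.lt_succ_self t)]

lemma sum_snoc {X : Type*} [Fintype X] (n : ℕ) (G : (Fin (n + 1) → X) → ℝ) :
    ∑ h : Fin (n + 1) → X, G h = ∑ h : Fin n → X, ∑ x : X, G (Fin.snoc h x) := by
  rw [← (Fin.snocEquiv (fun _ => X)).sum_comp G, Fintype.sum_prod_type, Finset.sum_comm]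
  rfl

lemma gp_snoc (μ0 : 𝒮 → ℝ) (P : 𝒮 → 𝒜 → 𝒮 → ℝ) (w : ℕ → 𝒮 → 𝒜 → ℝ) (n : ℕ)
    (h : Fin (n + 1) → 𝒮 × 𝒜) (x : 𝒮 × 𝒜) :
    gp μ0 P w (n + 1) (Fin.snoc h x)
      = gp μ0 P w n h *
        (w (n + 1) x.1 x.2 * P (h (Fin.last n)).1 (h (Fin.last n)).2 x.1) := by
  unfold gp
  rw [Fin.prod_univ_castSucc (f := fun t : Fin (n+2) => w t ((Fin.snoc h x : Fin (n+2) → 𝒮 × 𝒜) t).1 ((Fin.snoc h x : Fin (n+2) → 𝒮 × 𝒜) t).2),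
      Fin.prod_univ_castSucc (f := fun t : Fin (n+1) => P ((Fin.snoc h x : Fin (n+2) → 𝒮 × 𝒜) t.castSucc).1 ((Fin.snoc h x : Fin (n+2) → 𝒮 × 𝒜) t.castSucc).2 ((Fin.snoc h x : Fin (n+2) → 𝒮 × 𝒜) t.succ).1)]
  have h0 : (0 : Fin (n + 2)) = Fin.castSucc 0 := rfl
  simp only [h0, Fin.snoc_castSucc, Fin.snoc_last, Fin.coe_castSucc, Fin.val_last,
    Fin.succ_castSucc, Fin.succ_last]
  ring

lemma gp_marg (μ0 : 𝒮 → ℝ) (P : 𝒮 → 𝒜 → 𝒮 → ℝ) (hPsum : ∀ s a, ∑ s', P s a s' = 1)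
    (w : ℕ → 𝒮 → 𝒜 → ℝ) (hw : ∀ j s, ∑ a, w j s a = 1) :
    ∀ (n : ℕ) (t : Fin (n + 1)) (F : 𝒮 → 𝒜 → ℝ),
      ∑ h : Fin (n + 1) → 𝒮 × 𝒜, gp μ0 P w n h * F (h t).1 (h t).2
        = ∑ s, ∑ a, rho μ0 P w t s * w t s a * F s a := by
  intro n
  induction n with
  | zero =>
    intro t F
    have ht : t = 0 := Fin.ext (by omega)
    subst ht
    rw [← (Equiv.funUnique (Fin 1) (𝒮 × 𝒜)).symm.sum_comp
      (fun h : Fin 1 → 𝒮 × 𝒜 => gp μ0 P w 0 h * F (h 0).1 (h 0).2),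
      Fintype.sum_prod_type]
    apply Finset.sum_congr rfl; intro s _
    apply Finset.sum_congr rfl; intro a _
    show gp μ0 P w 0 (fun _ => (s, a)) * F s a = rho μ0 P w 0 s * w 0 s a * F s a
    unfold gp
    simp [rho]
  | succ n ih =>
    intro t F
    rw [sum_snoc]
    have key : ∀ (h : Fin (n + 1) → 𝒮 × 𝒜) (x : 𝒮 × 𝒜),
        gp μ0 P w (n + 1) (Fin.snoc h x)
          = gp μ0 P w n h *
            (w (n + 1) x.1 x.2 * P (h (Fin.last n)).1 (h (Fin.last n)).2 x.1) :=
      gp_snoc μ0 P w n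
    induction t using Fin.lastCases with
    | last =>
      have step1 : ∀ h : Fin (n + 1) → 𝒮 × 𝒜, ∀ x : 𝒮 × 𝒜,
          gp μ0 P w (n + 1) (Fin.snoc h x) *
            F ((Fin.snoc h x : Fin (n+2) → 𝒮 × 𝒜) (Fin.last (n+1))).1
              ((Fin.snoc h x : Fin (n+2) → 𝒮 × 𝒜) (Fin.last (n+1))).2
          = (w (n + 1) x.1 x.2 * F x.1 x.2) *
              (gp μ0 P w n h * P (h (Fin.last n)).1 (h (Fin.last n)).2 x.1) := by
        intro h x
        rw [key, Fin.snoc_last]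
        ring
      simp only [step1]
      rw [Finset.sum_comm]
      have step2 : ∀ x : 𝒮 × 𝒜,
          ∑ h : Fin (n + 1) → 𝒮 × 𝒜, (w (n + 1) x.1 x.2 * F x.1 x.2) *
              (gp μ0 P w n h * P (h (Fin.last n)).1 (h (Fin.last n)).2 x.1)
            = (w (n + 1) x.1 x.2 * F x.1 x.2) * rho μ0 P w (n + 1) x.1 := by
        intro x
        rw [← Finset.mul_sum, ih (Fin.last n) (fun s a => P s a x.1)]
        simp only [Fin.val_last]
        rfl
      simp only [step2]
      rw [Fintype.sum_prod_type]
      simp only [Fin.val_last]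
      apply Finset.sum_congr rfl; intro s _
      apply Finset.sum_congr rfl; intro a _
      ring
    | cast t' =>
      have step1 : ∀ h : Fin (n + 1) → 𝒮 × 𝒜,
          ∑ x : 𝒮 × 𝒜, gp μ0 P w (n + 1) (Fin.snoc h x) *
            F ((Fin.snoc h x : Fin (n+2) → 𝒮 × 𝒜) t'.castSucc).1
              ((Fin.snoc h x : Fin (n+2) → 𝒮 × 𝒜) t'.castSucc).2
          = gp μ0 P w n h * F (h t').1 (h t').2 := by
        intro h
        have : ∀ x : 𝒮 × 𝒜, gp μ0 P w (n + 1) (Fin.snoc h x) *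
            F ((Fin.snoc h x : Fin (n+2) → 𝒮 × 𝒜) t'.castSucc).1
              ((Fin.snoc h x : Fin (n+2) → 𝒮 × 𝒜) t'.castSucc).2
            = (gp μ0 P w n h * F (h t').1 (h t').2) *
              (w (n + 1) x.1 x.2 * P (h (Fin.last n)).1 (h (Fin.last n)).2 x.1) := by
          intro x
          rw [key, Fin.snoc_castSucc]
          ring
        simp only [this]
        rw [← Finset.mul_sum, Fintype.sum_prod_type]
        have : ∀ s' : 𝒮, ∑ a' : 𝒜, w (n + 1) s' a' * P (h (Fin.last n)).1 (h (Fin.last n)).2 s'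
            = P (h (Fin.last n)).1 (h (Fin.last n)).2 s' := by
          intro s'
          rw [← Finset.sum_mul, hw]
          ring
        simp only [this, hPsum, mul_one]
      simp only [step1]
      rw [ih t' F]
      simp only [Fin.coe_castSucc]



lemma prod_mix_le (T : ℕ) (πb πe : 𝒮 → 𝒜 → ℝ) (hπb : ∀ s a, 0 < πb s a)
    (t : Fin (T + 1)) (h : Fin (T + 1) → 𝒮 × 𝒜) :
    (∏ j : Fin (T + 1), πb (h j).1 (h j).2) *
        (∏ j ∈ Finset.Iic t, πe (h j).1 (h j).2 / πb (h j).1 (h j).2)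
      = ∏ j : Fin (T + 1), (if (j : ℕ) ≤ (t : ℕ) then πe else πb) (h j).1 (h j).2 := by
  classical
  rw [← Finset.prod_mul_prod_compl (Finset.Iic t) (fun j => πb (h j).1 (h j).2),
    ← Finset.prod_mul_prod_compl (Finset.Iic t)
      (fun j => (if (j : ℕ) ≤ (t : ℕ) then πe else πb) (h j).1 (h j).2),
    mul_right_comm, ← Finset.prod_mul_distrib]
  congr 1
  · apply Finset.prod_congr rfl; intro j hj
    rw [Finset.mem_Iic] at hj
    rw [if_pos (Fin.le_def.mp hj), mul_comm, div_mul_cancel₀ _ (ne_of_gt (hπb _ _))]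
  · apply Finset.prod_congr rfl; intro j hj
    rw [Finset.mem_compl, Finset.mem_Iic] at hj
    rw [if_neg (fun hc => hj (Fin.le_def.mpr hc))]

lemma prod_mix_lt (T : ℕ) (πb πe : 𝒮 → 𝒜 → ℝ) (hπb : ∀ s a, 0 < πb s a)
    (t : Fin (T + 1)) (h : Fin (T + 1) → 𝒮 × 𝒜) :
    (∏ j : Fin (T + 1), πb (h j).1 (h j).2) *
        (∏ j ∈ Finset.Iio t, πe (h j).1 (h j).2 / πb (h j).1 (h j).2)
      = ∏ j : Fin (T + 1), (if (j : ℕ) < (t : ℕ) then πe else πb) (h j).1 (h j).2 := by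
  classical
  rw [← Finset.prod_mul_prod_compl (Finset.Iio t) (fun j => πb (h j).1 (h j).2),
    ← Finset.prod_mul_prod_compl (Finset.Iio t)
      (fun j => (if (j : ℕ) < (t : ℕ) then πe else πb) (h j).1 (h j).2),
    mul_right_comm, ← Finset.prod_mul_distrib]
  congr 1
  · apply Finset.prod_congr rfl; intro j hj
    rw [Finset.mem_Iio] at hj
    rw [if_pos (Fin.lt_def.mp hj), mul_comm, div_mul_cancel₀ _ (ne_of_gt (hπb _ _))]
  · apply Finset.prod_congr rfl; intro j hj
    rw [Finset.mem_compl, Finset.mem_Iio] at hj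
    rw [if_neg (fun hc => hj (Fin.lt_def.mpr hc))]

lemma traj_mul_cumRatio (T : ℕ) (μ0 : 𝒮 → ℝ) (P : 𝒮 → 𝒜 → 𝒮 → ℝ)
    (πb πe : 𝒮 → 𝒜 → ℝ) (hπb : ∀ s a, 0 < πb s a)
    (t : Fin (T + 1)) (h : Fin (T + 1) → 𝒮 × 𝒜) :
    trajProb T μ0 P πb h * cumRatio T πb πe t h
      = gp μ0 P (fun j => if j ≤ (t : ℕ) then πe else πb) T h := by
  unfold trajProb cumRatio gp
  rw [mul_right_comm, mul_assoc (μ0 (h 0).1), prod_mix_le T πb πe hπb t h]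

lemma traj_mul_cumRatioLt (T : ℕ) (μ0 : 𝒮 → ℝ) (P : 𝒮 → 𝒜 → 𝒮 → ℝ)
    (πb πe : 𝒮 → 𝒜 → ℝ) (hπb : ∀ s a, 0 < πb s a)
    (t : Fin (T + 1)) (h : Fin (T + 1) → 𝒮 × 𝒜) :
    trajProb T μ0 P πb h * cumRatioLt T πb πe t h
      = gp μ0 P (fun j => if j < (t : ℕ) then πe else πb) T h := by
  unfold trajProb cumRatioLt gp
  rw [mul_right_comm, mul_assoc (μ0 (h 0).1), prod_mix_lt T πb πe hπb t h]

end DRaux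

/-- Unbiasedness of the doubly robust estimator with oracle importance ratios, for every
family of plugged-in Q-functions `Q_t`:
`∑ₕ p_{π_b}(h) ∑ₜ γ^t [λ_t(h)(r(sₜ,aₜ) − Q_t(sₜ,aₜ)) + λ_{t−1}(h) ∑ₐ π_e(sₜ)(a) Q_t(sₜ,a)]
  = v(π_e)`. -/
theorem stmt_16 {𝒮 𝒜 : Type*} [Fintype 𝒮] [Nonempty 𝒮] [Fintype 𝒜] [Nonempty 𝒜]
    [DecidableEq 𝒮] [DecidableEq 𝒜]
    (T : ℕ) (γ : ℝ) (μ0 : 𝒮 → ℝ) (P : 𝒮 → 𝒜 → 𝒮 → ℝ) (r : 𝒮 → 𝒜 → ℝ)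
    (hμ0 : ∀ s, 0 ≤ μ0 s) (hμ0sum : ∑ s, μ0 s = 1)
    (hP : ∀ s a s', 0 ≤ P s a s') (hPsum : ∀ s a, ∑ s', P s a s' = 1)
    (πb πe : 𝒮 → 𝒜 → ℝ)
    (hπb : ∀ s a, 0 < πb s a) (hπbsum : ∀ s, ∑ a, πb s a = 1)
    (hπe : ∀ s a, 0 ≤ πe s a) (hπesum : ∀ s, ∑ a, πe s a = 1)
    (Q : Fin (T + 1) → 𝒮 → 𝒜 → ℝ) :
    ∑ h : Fin (T + 1) → 𝒮 × 𝒜,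
        trajProb T μ0 P πb h *
          ∑ t : Fin (T + 1), γ ^ (t : ℕ) *
            (cumRatio T πb πe t h * (r (h t).1 (h t).2 - Q t (h t).1 (h t).2) +
              cumRatioLt T πb πe t h * ∑ a, πe (h t).1 a * Q t (h t).1 a) =
      ∑ h : Fin (T + 1) → 𝒮 × 𝒜,
        trajProb T μ0 P πe h *
          ∑ t : Fin (T + 1), γ ^ (t : ℕ) * r (h t).1 (h t).2 := by
  classical
  -- mixed policies
  set wle : Fin (T + 1) → ℕ → 𝒮 → 𝒜 → ℝ :=
    fun t j => if j ≤ (t : ℕ) then πe else πb with hwle_def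
  set wlt : Fin (T + 1) → ℕ → 𝒮 → 𝒜 → ℝ :=
    fun t j => if j < (t : ℕ) then πe else πb with hwlt_def
  have hwle_sum : ∀ t : Fin (T + 1), ∀ j s, ∑ a, wle t j s a = 1 := by
    intro t j s
    simp only [hwle_def]
    split_ifs <;> simp [hπesum, hπbsum]
  have hwlt_sum : ∀ t : Fin (T + 1), ∀ j s, ∑ a, wlt t j s a = 1 := by
    intro t j s
    simp only [hwlt_def]
    split_ifs <;> simp [hπesum, hπbsum]
  have hπe_sum' : ∀ (j : ℕ) (s : 𝒮), ∑ a, (fun _ : ℕ => πe) j s a = 1 := fun _ s => hπesum s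
  -- common marginal
  set ρ : Fin (T + 1) → 𝒮 → ℝ := fun t => rho μ0 P (fun _ => πe) (t : ℕ) with hρ_def
  have hρle : ∀ t : Fin (T + 1), rho μ0 P (wle t) (t : ℕ) = ρ t := by
    intro t
    apply rho_congr
    intro j hj
    simp only [hwle_def, if_pos (le_of_lt hj)]
  have hρlt : ∀ t : Fin (T + 1), rho μ0 P (wlt t) (t : ℕ) = ρ t := by
    intro t
    apply rho_congr
    intro j hj
    simp only [hwlt_def, if_pos hj]
  -- rewrite LHS pointwise
  have hL : ∀ h : Fin (T + 1) → 𝒮 × 𝒜,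
      trajProb T μ0 P πb h *
          ∑ t : Fin (T + 1), γ ^ (t : ℕ) *
            (cumRatio T πb πe t h * (r (h t).1 (h t).2 - Q t (h t).1 (h t).2) +
              cumRatioLt T πb πe t h * ∑ a, πe (h t).1 a * Q t (h t).1 a)
        = ∑ t : Fin (T + 1), γ ^ (t : ℕ) *
            (gp μ0 P (wle t) T h * (r (h t).1 (h t).2 - Q t (h t).1 (h t).2) +
              gp μ0 P (wlt t) T h * ∑ a, πe (h t).1 a * Q t (h t).1 a) := by
    intro h
    rw [Finset.mul_sum]
    apply Finset.sum_congr rfl; intro t _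
    rw [← traj_mul_cumRatio T μ0 P πb πe hπb t h, ← traj_mul_cumRatioLt T μ0 P πb πe hπb t h]
    ring
  have hR : ∀ h : Fin (T + 1) → 𝒮 × 𝒜,
      trajProb T μ0 P πe h * ∑ t : Fin (T + 1), γ ^ (t : ℕ) * r (h t).1 (h t).2
        = ∑ t : Fin (T + 1), γ ^ (t : ℕ) *
            (gp μ0 P (fun _ => πe) T h * r (h t).1 (h t).2) := by
    intro h
    rw [Finset.mul_sum]
    apply Finset.sum_congr rfl; intro t _
    have : trajProb T μ0 P πe h = gp μ0 P (fun _ => πe) T h := rfl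
    rw [this]; ring
  simp only [hL, hR]
  rw [Finset.sum_comm]
  conv_rhs => rw [Finset.sum_comm]
  apply Finset.sum_congr rfl; intro t _
  -- per-time-step identity
  rw [← Finset.mul_sum, ← Finset.mul_sum, Finset.sum_add_distrib]
  have e1 : ∑ h : Fin (T + 1) → 𝒮 × 𝒜,
      gp μ0 P (wle t) T h * (r (h t).1 (h t).2 - Q t (h t).1 (h t).2)
        = ∑ s, ∑ a, ρ t s * πe s a * (r s a - Q t s a) := by
    rw [gp_marg μ0 P hPsum (wle t) (hwle_sum t) T t (fun s a => r s a - Q t s a)]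
    apply Finset.sum_congr rfl; intro s _
    apply Finset.sum_congr rfl; intro a _
    rw [hρle t]
    simp only [hwle_def, if_pos (le_refl (t : ℕ))]
  have e2 : ∑ h : Fin (T + 1) → 𝒮 × 𝒜,
      gp μ0 P (wlt t) T h * ∑ a, πe (h t).1 a * Q t (h t).1 a
        = ∑ s, ∑ a, ρ t s * πb s a * ∑ a', πe s a' * Q t s a' := by
    rw [gp_marg μ0 P hPsum (wlt t) (hwlt_sum t) T t
      (fun s _ => ∑ a', πe s a' * Q t s a')]
    apply Finset.sum_congr rfl; intro s _
    apply Finset.sum_congr rfl; intro a _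
    rw [hρlt t]
    simp only [hwlt_def, if_neg (lt_irrefl (t : ℕ))]
  have e3 : ∑ h : Fin (T + 1) → 𝒮 × 𝒜,
      gp μ0 P (fun _ => πe) T h * r (h t).1 (h t).2
        = ∑ s, ∑ a, ρ t s * πe s a * r s a := by
    rw [gp_marg μ0 P hPsum (fun _ => πe) hπe_sum' T t r]
  rw [e1, e2, e3]
  congr 1
  -- final algebra
  have key2 : ∑ s, ∑ a, ρ t s * πb s a * ∑ a', πe s a' * Q t s a'
      = ∑ s, ∑ a, ρ t s * πe s a * Q t s a := by
    apply Finset.sum_congr rfl; intro s _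
    have h1 : ∑ a, ρ t s * πb s a * ∑ a', πe s a' * Q t s a'
        = (∑ a, πb s a) * (ρ t s * ∑ a', πe s a' * Q t s a') := by
      rw [Finset.sum_mul]
      apply Finset.sum_congr rfl; intro a _
      ring
    rw [h1, hπbsum, one_mul, Finset.mul_sum]
    apply Finset.sum_congr rfl; intro a _
    ring
  rw [key2, ← Finset.sum_add_distrib]
  apply Finset.sum_congr rfl; intro s _
  rw [← Finset.sum_add_distrib]
  apply Finset.sum_congr rfl; intro a _
  ring
end

section
/- In the finite-horizon MDP setting, define the target-policy Q-functions recursively by Q_T^{π_e}(s, a) = r(s, a) and, for t < T, Q_t^{π_e}(s, a) = r(s, a) + γ·∑_{s' ∈ 𝒮} P(s)(a)(s')·∑_{a' ∈ 𝒜} π_e(s')(a')·Q_{t+1}^{π_e}(s', a'). For a trajectory h define the Bellman residual U_t(h) = r(s_t, a_t) − Q_t^{π_e}(s_t, a_t) + γ·∑_{a' ∈ 𝒜} π_e(s_{t+1})(a')·Q_{t+1}^{π_e}(s_{t+1}, a') for t < T, and U_T(h) = r(s_T, a_T) − Q_T^{π_e}(s_T, a_T). Then for every t ∈ {0,…,T}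 and every function f : (𝒮 × 𝒜)^{t+1} → ℝ, ∑_h p_{π_b}(h) · U_t(h) · f(s_0, a_0, …, s_t, a_t) = 0. -/
open Finset

/-! Under the behavior policy the trajectory is a Markov chain on `𝒮 × 𝒜`. Summing out all
coordinates after time `t + 1` therefore leaves the law of the history up to `t + 1`, and
summing out `(s_{t+1}, a_{t+1})` given the history up to `t` replaces `U_t` by its conditional
mean `r(s_t,a_t) - Q_t(s_t,a_t) + γ ∑_{s'} P(s_t,a_t,s') ∑_{a'} π_e(s',a') Q_{t+1}(s',a')`,
which vanishes by the Bellman recursion for `Q`. At `t = T` the residual is identically zero. -/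

theorem sum_pi_fin_succ_eq_sum_snoc {α M : Type*} [Fintype α] [AddCommMonoid M] {n : ℕ}
    (F : (Fin (n + 1) → α) → M) :
    ∑ g, F g = ∑ g₀ : Fin n → α, ∑ x, F (Fin.snoc g₀ x) := by
  rw [← (Fin.snocEquiv fun _ => α).sum_comp F, Fintype.sum_prod_type, sum_comm]
  rfl

section MarkovChain

variable {𝒮 𝒜 : Type*} {μ0 : 𝒮 → ℝ} {P : 𝒮 → 𝒜 → 𝒮 → ℝ} {π : 𝒮 → 𝒜 → ℝ}

theorem trajProb_snoc {m : ℕ} (g : Fin (m + 1) → 𝒮 × 𝒜) (x : 𝒮 × 𝒜) :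
    trajProb (m + 1) μ0 P π (Fin.snoc g x) =
      trajProb m μ0 P π g * (π x.1 x.2 * P (g (Fin.last m)).1 (g (Fin.last m)).2 x.1) := by
  have h0 : (Fin.snoc g x : Fin (m + 2) → 𝒮 × 𝒜) 0 = g 0 := Fin.snoc_castSucc (i := 0) ..
  unfold trajProb
  simp only [h0, Fin.prod_univ_castSucc, Fin.snoc_castSucc, Fin.snoc_last, Fin.succ_last,
    Fin.succ_castSucc]
  ring

variable [Fintype 𝒮] [Fintype 𝒜]

theorem sum_policy_mul (hπ : ∀ s, ∑ a, π s a = 1) (p : 𝒮 → ℝ) :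
    ∑ x : 𝒮 × 𝒜, π x.1 x.2 * p x.1 = ∑ s, p s := by
  simp only [Fintype.sum_prod_type, ← sum_mul, hπ, one_mul]

theorem sum_trajProb_succ (hπ : ∀ s, ∑ a, π s a = 1) {m : ℕ}
    (F : (Fin (m + 1) → 𝒮 × 𝒜) → 𝒮 → ℝ) :
    ∑ g : Fin (m + 1 + 1) → 𝒮 × 𝒜,
        trajProb (m + 1) μ0 P π g * F (Fin.init g) (g (Fin.last _)).1 =
      ∑ g, trajProb m μ0 P π g * ∑ s', P (g (Fin.last m)).1 (g (Fin.last m)).2 s' * F g s' := by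
  rw [sum_pi_fin_succ_eq_sum_snoc]
  refine sum_congr rfl fun g _ => ?_
  simp only [trajProb_snoc, Fin.init_snoc, Fin.snoc_last, mul_sum]
  rw [← sum_policy_mul hπ]
  exact sum_congr rfl fun x _ => by ring

theorem sum_trajProb_restrict (hP : ∀ s a, ∑ s', P s a s' = 1) (hπ : ∀ s, ∑ a, π s a = 1)
    {m M : ℕ} (hmM : m ≤ M) (G : (Fin (m + 1) → 𝒮 × 𝒜) → ℝ) :
    ∑ g : Fin (M + 1) → 𝒮 × 𝒜,
        trajProb M μ0 P π g * G (fun j => g (Fin.castLE (Nat.succ_le_succ hmM) j)) =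
      ∑ g, trajProb m μ0 P π g * G g := by
  induction M, hmM using Nat.le_induction with
  | base => rfl
  | succ M hmM ih =>
    have step := sum_trajProb_succ (μ0 := μ0) (P := P) hπ
      fun g _ => G fun j => g (Fin.castLE (Nat.succ_le_succ hmM) j)
    simp only [← sum_mul, hP, one_mul] at step
    exact step.trans ih

end MarkovChain

theorem stmt_17_general {𝒮 𝒜 : Type*} [Fintype 𝒮] [Fintype 𝒜]
    (T : ℕ) (γ : ℝ) (μ0 : 𝒮 → ℝ) (P : 𝒮 → 𝒜 → 𝒮 → ℝ) (r : 𝒮 → 𝒜 → ℝ)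
    (hPsum : ∀ s a, ∑ s', P s a s' = 1)
    (πb πe : 𝒮 → 𝒜 → ℝ)
    (hπbsum : ∀ s, ∑ a, πb s a = 1)
    -- the target-policy Q-functions, defined by backward recursion
    (Q : Fin (T + 1) → 𝒮 → 𝒜 → ℝ)
    (hQlast : ∀ s a, Q (Fin.last T) s a = r s a)
    (hQrec : ∀ t : Fin T, ∀ s a, Q t.castSucc s a =
      r s a + γ * ∑ s', P s a s' * ∑ a', πe s' a' * Q t.succ s' a')
    -- the Bellman residuals
    (U : Fin (T + 1) → (Fin (T + 1) → 𝒮 × 𝒜) → ℝ)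
    (hU : ∀ t : Fin T, ∀ h : Fin (T + 1) → 𝒮 × 𝒜, U t.castSucc h =
      r (h t.castSucc).1 (h t.castSucc).2 - Q t.castSucc (h t.castSucc).1 (h t.castSucc).2 +
        γ * ∑ a', πe (h t.succ).1 a' * Q t.succ (h t.succ).1 a')
    (hUlast : ∀ h : Fin (T + 1) → 𝒮 × 𝒜, U (Fin.last T) h =
      r (h (Fin.last T)).1 (h (Fin.last T)).2 -
        Q (Fin.last T) (h (Fin.last T)).1 (h (Fin.last T)).2) :
    ∀ t : Fin (T + 1), ∀ f : (Fin ((t : ℕ) + 1) → 𝒮 × 𝒜) → ℝ,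
      ∑ h : Fin (T + 1) → 𝒮 × 𝒜,
        trajProb T μ0 P πb h * U t h * f (fun j => h (Fin.castLE t.isLt j)) = 0 := by
  intro t
  induction t using Fin.lastCases with
  | last =>
    intro f
    exact sum_eq_zero fun h _ => by rw [hUlast, hQlast, sub_self, mul_zero, zero_mul]
  | cast t =>
    intro f
    set V : 𝒮 → ℝ := fun s' => ∑ a', πe s' a' * Q t.succ s' a'
    have hmean : ∀ s a, ∑ s', P s a s' * (r s a - Q t.castSucc s a + γ * V s') = 0 := by
      intro s a
      simp only [hQrec t s a, mul_add, mul_sub, sum_add_distrib, sum_sub_distrib, ← sum_mul,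
        hPsum, ← mul_sum, mul_left_comm _ γ]
      ring
    -- `U_t · f` as a function of the history up to `t` and of the next state
    set K : (Fin (t + 1) → 𝒮 × 𝒜) → 𝒮 → ℝ := fun g s' =>
      (r (g (Fin.last t)).1 (g (Fin.last t)).2 - Q t.castSucc (g (Fin.last t)).1 (g (Fin.last t)).2
        + γ * V s') * f g
    set G : (Fin (t + 1 + 1) → 𝒮 × 𝒜) → ℝ := fun g => K (Fin.init g) (g (Fin.last _)).1
    calc _ = ∑ h : Fin (T + 1) → 𝒮 × 𝒜,
          trajProb T μ0 P πb h * G (fun j => h (Fin.castLE (Nat.succ_le_succ t.isLt) j)) :=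
          sum_congr rfl fun h _ => by rw [hU t h, mul_assoc]; rfl
      _ = ∑ g, trajProb (t + 1) μ0 P πb g * G g := sum_trajProb_restrict hPsum hπbsum t.isLt G
      _ = ∑ g, trajProb t μ0 P πb g * ∑ s', P (g (Fin.last t)).1 (g (Fin.last t)).2 s' * K g s' :=
          sum_trajProb_succ hπbsum K
      _ = 0 := sum_eq_zero fun g _ => by
          simp only [K, ← mul_assoc, ← sum_mul, hmean, zero_mul, mul_zero]

/-- Orthogonality of the Bellman residuals of the correctly specified target-policy
Q-functions to every function of the history up to time `t`, under the behavior-policy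
trajectory distribution. -/
theorem stmt_17 {𝒮 𝒜 : Type*} [Fintype 𝒮] [Nonempty 𝒮] [Fintype 𝒜] [Nonempty 𝒜]
    [DecidableEq 𝒮] [DecidableEq 𝒜]
    (T : ℕ) (γ : ℝ) (μ0 : 𝒮 → ℝ) (P : 𝒮 → 𝒜 → 𝒮 → ℝ) (r : 𝒮 → 𝒜 → ℝ)
    (hμ0 : ∀ s, 0 ≤ μ0 s) (hμ0sum : ∑ s, μ0 s = 1)
    (hP : ∀ s a s', 0 ≤ P s a s') (hPsum : ∀ s a, ∑ s', P s a s' = 1)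
    (πb πe : 𝒮 → 𝒜 → ℝ)
    (hπb : ∀ s a, 0 < πb s a) (hπbsum : ∀ s, ∑ a, πb s a = 1)
    (hπe : ∀ s a, 0 ≤ πe s a) (hπesum : ∀ s, ∑ a, πe s a = 1)
    -- the target-policy Q-functions, defined by backward recursion
    (Q : Fin (T + 1) → 𝒮 → 𝒜 → ℝ)
    (hQlast : ∀ s a, Q (Fin.last T) s a = r s a)
    (hQrec : ∀ t : Fin T, ∀ s a, Q t.castSucc s a =
      r s a + γ * ∑ s', P s a s' * ∑ a', πe s' a' * Q t.succ s' a')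
    -- the Bellman residuals
    (U : Fin (T + 1) → (Fin (T + 1) → 𝒮 × 𝒜) → ℝ)
    (hU : ∀ t : Fin T, ∀ h : Fin (T + 1) → 𝒮 × 𝒜, U t.castSucc h =
      r (h t.castSucc).1 (h t.castSucc).2 - Q t.castSucc (h t.castSucc).1 (h t.castSucc).2 +
        γ * ∑ a', πe (h t.succ).1 a' * Q t.succ (h t.succ).1 a')
    (hUlast : ∀ h : Fin (T + 1) → 𝒮 × 𝒜, U (Fin.last T) h =
      r (h (Fin.last T)).1 (h (Fin.last T)).2 -
        Q (Fin.last T) (h (Fin.last T)).1 (h (Fin.last T)).2) :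
    ∀ t : Fin (T + 1), ∀ f : (Fin ((t : ℕ) + 1) → 𝒮 × 𝒜) → ℝ,
      ∑ h : Fin (T + 1) → 𝒮 × 𝒜,
        trajProb T μ0 P πb h * U t h * f (fun j => h (Fin.castLE t.isLt j)) = 0 :=
  stmt_17_general T γ μ0 P r hPsum πb πe hπbsum Q hQlast hQrec U hU hUlast
end

section
/- In the finite-horizon MDP setting, define the time-t marginal occupancy of a policy π by d_{π,t}(s, a) = ∑_{h : s_t(h) = s, a_t(h) = a} p_π(h). Then: (i) v(π_e) = ∑_{t=0}^{T} γ^t ∑_{(s,a) ∈ 𝒮 × 𝒜} d_{π_e,t}(s, a)·r(s, a); and (ii) if in addition d_{π_b,t}(s, a) > 0 for every t, s, a, then ∑_h p_{π_b}(h) · ∑_{t=0}^{T} γ^t · (d_{π_e,t}(s_t(h), a_t(h)) / d_{π_b,t}(s_t(h), a_t(h))) · r(s_t(h), a_t(h)) = v(π_e). -/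
open Finset

/-- Time-`t` marginal occupancy of a policy:
`d_{π,t}(s, a) = ∑_{h : (s_t(h), a_t(h)) = (s, a)} p_π(h)`. -/
noncomputable def occupancy {𝒮 𝒜 : Type*} [Fintype 𝒮] [Fintype 𝒜]
    [DecidableEq 𝒮] [DecidableEq 𝒜] (T : ℕ) (μ0 : 𝒮 → ℝ)
    (P : 𝒮 → 𝒜 → 𝒮 → ℝ) (π : 𝒮 → 𝒜 → ℝ) (t : Fin (T + 1)) (s : 𝒮) (a : 𝒜) : ℝ :=
  ∑ h ∈ Finset.univ.filter (fun h : Fin (T + 1) → 𝒮 × 𝒜 => h t = (s, a)),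
    trajProb T μ0 P π h

lemma occupancy_key {𝒮 𝒜 : Type*} [Fintype 𝒮] [Fintype 𝒜]
    [DecidableEq 𝒮] [DecidableEq 𝒜] (T : ℕ) (μ0 : 𝒮 → ℝ)
    (P : 𝒮 → 𝒜 → 𝒮 → ℝ) (π : 𝒮 → 𝒜 → ℝ) (g : Fin (T + 1) → 𝒮 → 𝒜 → ℝ) :
    ∑ h : Fin (T + 1) → 𝒮 × 𝒜, trajProb T μ0 P π h * ∑ t, g t (h t).1 (h t).2 =
      ∑ t, ∑ s, ∑ a, occupancy T μ0 P π t s a * g t s a := by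
  simp_rw [Finset.mul_sum]
  rw [Finset.sum_comm]
  refine Finset.sum_congr rfl fun t _ => ?_
  rw [← Finset.sum_product']
  rw [← Finset.sum_fiberwise (Finset.univ : Finset (Fin (T + 1) → 𝒮 × 𝒜))
    (fun h => h t) (fun h => trajProb T μ0 P π h * g t (h t).1 (h t).2)]
  refine Finset.sum_congr rfl fun p _ => ?_
  rw [occupancy, Finset.sum_mul]
  refine Finset.sum_congr rfl fun h hh => ?_
  simp only [Finset.mem_filter] at hh
  rw [hh.2]

/-- (i) The target value equals the occupancy-weighted reward; (ii) unbiasedness of the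
marginalized importance sampling estimator with the oracle marginal ratio
`w_t = d_{π_e,t} / d_{π_b,t}`. -/
theorem stmt_18 {𝒮 𝒜 : Type*} [Fintype 𝒮] [Nonempty 𝒮] [Fintype 𝒜] [Nonempty 𝒜]
    [DecidableEq 𝒮] [DecidableEq 𝒜]
    (T : ℕ) (γ : ℝ) (μ0 : 𝒮 → ℝ) (P : 𝒮 → 𝒜 → 𝒮 → ℝ) (r : 𝒮 → 𝒜 → ℝ)
    (hμ0 : ∀ s, 0 ≤ μ0 s) (hμ0sum : ∑ s, μ0 s = 1)
    (hP : ∀ s a s', 0 ≤ P s a s') (hPsum : ∀ s a, ∑ s', P s a s' = 1)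
    (πb πe : 𝒮 → 𝒜 → ℝ)
    (hπb : ∀ s a, 0 < πb s a) (hπbsum : ∀ s, ∑ a, πb s a = 1)
    (hπe : ∀ s a, 0 ≤ πe s a) (hπesum : ∀ s, ∑ a, πe s a = 1) :
    (∑ h : Fin (T + 1) → 𝒮 × 𝒜,
        trajProb T μ0 P πe h * ∑ t : Fin (T + 1), γ ^ (t : ℕ) * r (h t).1 (h t).2 =
      ∑ t : Fin (T + 1), γ ^ (t : ℕ) *
        ∑ s, ∑ a, occupancy T μ0 P πe t s a * r s a) ∧
    ((∀ (t : Fin (T + 1)) (s : 𝒮) (a : 𝒜), 0 < occupancy T μ0 P πb t s a) →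
      ∑ h : Fin (T + 1) → 𝒮 × 𝒜,
          trajProb T μ0 P πb h *
            ∑ t : Fin (T + 1), γ ^ (t : ℕ) *
              (occupancy T μ0 P πe t (h t).1 (h t).2 /
                occupancy T μ0 P πb t (h t).1 (h t).2) * r (h t).1 (h t).2 =
        ∑ h : Fin (T + 1) → 𝒮 × 𝒜,
          trajProb T μ0 P πe h *
            ∑ t : Fin (T + 1), γ ^ (t : ℕ) * r (h t).1 (h t).2) := by
  constructor
  · rw [occupancy_key T μ0 P πe (fun t s a => γ ^ (t : ℕ) * r s a)]
    simp_rw [Finset.mul_sum, mul_left_comm]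
  · intro hpos
    rw [occupancy_key T μ0 P πb
        (fun t s a => γ ^ (t : ℕ) * (occupancy T μ0 P πe t s a /
          occupancy T μ0 P πb t s a) * r s a),
      occupancy_key T μ0 P πe (fun t s a => γ ^ (t : ℕ) * r s a)]
    refine Finset.sum_congr rfl fun t _ => Finset.sum_congr rfl fun s _ =>
      Finset.sum_congr rfl fun a _ => ?_
    have hb := (hpos t s a).ne'
    field_simp
end
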